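/- arXiv:0904.2944 — 11 statements merged into one kernel-verified Lean document; each statement's English description precedes it below -/
import Mathlib

section
/- Let (f, τ, c) be degree −2 branched covering data with critical value v = f(c), and assume f is confluent. Let K ⊆ ℂ be a non-separating continuum. If v ∉ K, then f⁻¹(K) has exactly two connected components, these components are disjoint, and f restricted to each of them is a homeomorphism onto K. If v ∈ K, then f⁻¹(K) is connected (it is the unique pullback of K) and contains the critical point c. -/
open Set Topology

/-- A continuum: a nonempty compact connected subset of ℂ. -/
def IsContinuum (K : Set ℂ) : Prop := IsCompact K ∧ IsConnected K

/-- `C` is a connected component of the set `S`. -/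
def IsComponentOf (C S : Set ℂ) : Prop := ∃ x ∈ S, C = connectedComponentIn S x

/-- A confluent map: each component of the preimage of a continuum maps onto it. -/
def Confluent (f : ℂ → ℂ) : Prop :=
  ∀ K C : Set ℂ, IsContinuum K → IsComponentOf C (f ⁻¹' K) → f '' C = K

/-!
If `f c ∈ K`, confluence makes every component of `f⁻¹' K` map onto `K`, so each contains `c`,
the only preimage of the critical value. If `f c ∉ K`, the components `A ∋ x` and `B ∋ τ x` of
`f⁻¹' K` map onto `K` and exhaust `f⁻¹' K`, and `f` is injective on each once `A ≠ B`.
Suppose `A = B`. Since `f` is open and proper, `f⁻¹' Kᶜ` is connected, so a path runs from `c`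
to `∞` off `f⁻¹' K`, and `A` lies in a bounded `τ`-invariant connected open set `G` missing it.
A loop in `G` from `x` to `τ x` followed by its `τ`-image winds zero times around `c` (push `c`
to `∞` along the path), hence contracts in `ℂ \ {c}`; so its image under `z ↦ z - τ z` contracts
in `ℂ \ {0}`. But that image loop is antipodal, its second half being the negative of its first,
and antipodal loops have odd winding number.
-/

open Function Complex

theorem exists_continuous_exp_eq {X : Type*} [TopologicalSpace X] [SimplyConnectedSpace X]
    [LocallyPathConnectedSpace X] {g : X → ℂ} (hg : Continuous g) (hg0 : ∀ x, g x ≠ 0) :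
    ∃ L : X → ℂ, Continuous L ∧ ∀ x, exp (L x) = g x := by
  obtain ⟨x₀⟩ : Nonempty X := inferInstance
  obtain ⟨L, ⟨-, hL⟩, -⟩ := isCoveringMapOn_exp.existsUnique_continuousMap_lifts ⟨g, hg⟩
    (exp_log (hg0 x₀)) hg0
  exact ⟨L, L.continuous, congrFun hL⟩

theorem IsPreconnected.sub_eq_sub_of_exp_eq_exp {X : Type*} [TopologicalSpace X] {S : Set X}
    (hS : IsPreconnected S) {L₁ L₂ : X → ℂ} (h₁ : ContinuousOn L₁ S) (h₂ : ContinuousOn L₂ S)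
    (hexp : ∀ x ∈ S, exp (L₁ x) = exp (L₂ x)) {x y : X} (hx : x ∈ S) (hy : y ∈ S) :
    L₁ x - L₂ x = L₁ y - L₂ y := by
  have : DiscreteTopology (AddSubgroup.zmultiples (2 * Real.pi * I)) :=
    NormedSpace.discreteTopology_zmultiples _
  refine hS.constant_of_mapsTo (T := AddSubgroup.zmultiples (2 * Real.pi * I))
    DiscreteTopology.isDiscrete (h₁.sub h₂) (fun z hz => ?_) hx hy
  obtain ⟨n, hn⟩ := (exp_eq_one_iff (x := L₁ z - L₂ z)).1
    (by rw [exp_sub, hexp z hz, div_self (exp_ne_zero _)])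
  exact ⟨n, by simp only [Pi.sub_apply, hn, zsmul_eq_mul]⟩

/-- `φ` has a continuous logarithm, and the loop `φ|[0, 1]` has winding number zero about `0`. -/
def HasClosedLog (φ : ℝ → ℂ) : Prop :=
  ∃ l : ℝ → ℂ, Continuous l ∧ (∀ t, exp (l t) = φ t) ∧ l 1 = l 0

theorem HasClosedLog.eq_of_exp_eq {φ l : ℝ → ℂ} (hφ : HasClosedLog φ) (hl : Continuous l)
    (hexp : ∀ t, exp (l t) = φ t) : l 1 = l 0 := by
  obtain ⟨l₀, hl₀, hexp₀, hl₀1⟩ := hφ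
  have := isPreconnected_Icc.sub_eq_sub_of_exp_eq_exp hl.continuousOn hl₀.continuousOn
    (fun t _ => (hexp t).trans (hexp₀ t).symm) (right_mem_Icc.2 zero_le_one)
    (left_mem_Icc.2 zero_le_one)
  rwa [hl₀1, sub_left_inj] at this

theorem hasClosedLog_const {z : ℂ} (hz : z ≠ 0) : HasClosedLog fun _ => z :=
  ⟨fun _ => log z, continuous_const, fun _ => exp_log hz, rfl⟩

theorem hasClosedLog_sub_of_norm_lt {φ : ℝ → ℂ} (hφ : Continuous φ) (hφ1 : φ 1 = φ 0) {w : ℂ}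
    (hw : ∀ t, ‖φ t‖ < ‖w‖) : HasClosedLog fun t => φ t - w := by
  have hw0 : w ≠ 0 := norm_pos_iff.1 ((norm_nonneg _).trans_lt (hw 0))
  have hslit : ∀ t, 1 - φ t / w ∈ slitPlane := fun t => by
    rw [sub_eq_add_neg]
    refine mem_slitPlane_of_norm_lt_one ?_
    rw [norm_neg, norm_div, div_lt_one (norm_pos_iff.2 hw0)]
    exact hw t
  refine ⟨fun t => log (-w) + log (1 - φ t / w), ?_, fun t => ?_, by simp only [hφ1]⟩
  · exact continuous_const.add ((continuous_const.sub (hφ.div_const w)).clog hslit)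
  · rw [exp_add, exp_log (neg_ne_zero.2 hw0), exp_log (slitPlane_ne_zero (hslit t))]
    field_simp
    ring

theorem HasClosedLog.of_homotopy {H : ℝ × ℝ → ℂ} (hH : Continuous H) (hH0 : ∀ p, H p ≠ 0)
    (hloop : ∀ s, H (s, 1) = H (s, 0)) (h1 : HasClosedLog fun t => H (1, t)) :
    HasClosedLog fun t => H (0, t) := by
  obtain ⟨L, hL, hLexp⟩ := exists_continuous_exp_eq hH hH0
  have hLs : ∀ s, Continuous fun t => L (s, t) := fun s => hL.comp (Continuous.prodMk_right s)
  have hjump : ∀ s, exp (L (s, 1) - L (s, 0)) = exp 0 := fun s => by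
    rw [exp_sub, hLexp, hLexp, hloop, div_self (hH0 _), exp_zero]
  have hconst := isPreconnected_Icc.sub_eq_sub_of_exp_eq_exp (L₁ := fun s => L (s, 1) - L (s, 0))
    (((hL.comp (Continuous.prodMk_left 1)).sub (hL.comp (Continuous.prodMk_left 0))).continuousOn)
    continuousOn_const (fun s _ => hjump s) (left_mem_Icc.2 zero_le_one)
    (right_mem_Icc.2 zero_le_one)
  refine ⟨fun t => L (0, t), hLs 0, fun t => hLexp _, ?_⟩
  have h1' : L (1, 1) = L (1, 0) := h1.eq_of_exp_eq (hLs 1) fun t => hLexp _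
  simp only [h1', sub_self, sub_zero] at hconst
  exact sub_eq_zero.1 hconst

theorem HasClosedLog.comp_of_sub {φ : ℝ → ℂ} {c : ℂ} (hφ : HasClosedLog fun t => φ t - c)
    {F : ℂ → ℂ} (hF : Continuous F) (hF0 : ∀ z, z ≠ c → F z ≠ 0) :
    HasClosedLog fun t => F (φ t) := by
  obtain ⟨l, hl, hlexp, hl1⟩ := hφ
  let Q : ℝ × ℝ → ℂ := fun p => c + exp ((1 - p.1) * l p.2 + p.1 * l 0)
  have hQ : ∀ p, Q p ≠ c := fun p h => exp_ne_zero _ (add_eq_left.1 h)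
  have hQ0 : ∀ t, Q (0, t) = φ t := fun t => by simp [Q, hlexp]
  have h := HasClosedLog.of_homotopy (H := F ∘ Q) (hF.comp (by fun_prop))
    (fun p => hF0 _ (hQ p)) (fun s => by simp [Q, hl1])
    (by simpa [Q] using hasClosedLog_const (hF0 _ (hQ (1, 0))))
  simpa [hQ0] using h

theorem not_hasClosedLog_of_antiperiodicOn {φ : ℝ → ℂ}
    (hφ : ∀ t ∈ Icc (0 : ℝ) (1 / 2), φ (t + 1 / 2) = -φ t) : ¬HasClosedLog φ := by
  rintro ⟨m, hm, hmexp, hm1⟩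
  let d : ℝ → ℂ := fun t => m (t + 1 / 2) - m t
  have hd : ∀ t ∈ Icc (0 : ℝ) (1 / 2), exp (d t) = exp (Real.pi * I) := fun t ht => by
    rw [exp_sub, hmexp, hmexp, hφ t ht, neg_div, div_self (by rw [← hmexp]; exact exp_ne_zero _),
      exp_pi_mul_I]
  have hconst := isPreconnected_Icc.sub_eq_sub_of_exp_eq_exp (L₁ := d)
    (hm.comp (continuous_add_const _) |>.sub hm).continuousOn continuousOn_const hd
    (left_mem_Icc.2 (by norm_num)) (right_mem_Icc.2 (by norm_num))
  have hd0 : d 0 = 0 := by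
    have hsum : d 0 + d (1 / 2) = 0 := by simp only [d]; norm_num [hm1]
    linear_combination (hsum + hconst) / 2
  have := hd 0 (left_mem_Icc.2 (by norm_num))
  rw [hd0, exp_zero, exp_pi_mul_I] at this
  norm_num at this

theorem JoinedIn.exists_antipodal_loop {X : Type*} [TopologicalSpace X] {τ : X → X}
    (hτ : Continuous τ) (hττ : Involutive τ) {G : Set X} (hGτ : MapsTo τ G G) {x : X}
    (hx : JoinedIn G x (τ x)) :
    ∃ A : ℝ → X, Continuous A ∧ (∀ t, A t ∈ G) ∧ A 1 = A 0 ∧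
      ∀ t ∈ Icc (0 : ℝ) (1 / 2), A (t + 1 / 2) = τ (A t) := by
  let α := hx.somePath
  have hα : ∀ u, α.extend u ∈ G := fun u => by
    obtain ⟨v, hv⟩ := α.extend_range ▸ mem_range_self u
    exact hv ▸ hx.somePath_mem v
  refine ⟨fun t => if t ≤ 1 / 2 then α.extend (2 * t) else τ (α.extend (2 * t - 1)),
    ?_, fun t => ?_, ?_, fun t ht => ?_⟩
  · refine Continuous.if_le (by fun_prop) (hτ.comp (by fun_prop)) continuous_id continuous_const
      fun t ht => ?_
    simp [ht]
  · dsimp only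
    split_ifs
    exacts [hα _, hGτ (hα _)]
  · norm_num [hττ x]
  · rcases ht.1.eq_or_lt with rfl | ht0
    · norm_num
    · simp only [show ¬ t + 1 / 2 ≤ 1 / 2 by linarith, ht.2, if_true, if_false]
      ring_nf

theorem IsPathConnected.exists_path_apply_mem_of_involutive {τ : ℂ → ℂ} {c w : ℂ}
    (hτ : Continuous τ) (hττ : Involutive τ) (hfix : ∀ z, τ z = z → z = c) {G : Set ℂ}
    (hG : IsPathConnected G) (hGτ : MapsTo τ G G) (hGw : ∀ z ∈ G, ‖z‖ < ‖w‖) (γ : Path c w) :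
    ∃ t, γ t ∈ G := by
  by_contra! hγG
  obtain ⟨x, hx⟩ := hG.nonempty
  obtain ⟨A, hA, hAG, hA1, hAτ⟩ :=
    (hG.joinedIn x hx (τ x) (hGτ hx)).exists_antipodal_loop hτ hττ hGτ
  have hγext : ∀ s, γ.extend s ∉ G := fun s h => by
    obtain ⟨t, ht⟩ := γ.extend_range ▸ mem_range_self s
    exact hγG t (ht ▸ h)
  have hAc : HasClosedLog fun t => A t - c := by
    have := HasClosedLog.of_homotopy (H := fun p => A p.2 - γ.extend p.1) (by fun_prop)
      (fun p h => hγext p.1 (sub_eq_zero.1 h ▸ hAG p.2)) (fun s => by rw [hA1])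
      (by simpa using hasClosedLog_sub_of_norm_lt hA hA1 fun t => hGw _ (hAG t))
    simpa using this
  have hAτ' : HasClosedLog fun t => A t - τ (A t) :=
    hAc.comp_of_sub (F := fun z => z - τ z) (by fun_prop)
      fun z hz h => hz (hfix z (sub_eq_zero.1 h).symm)
  refine not_hasClosedLog_of_antiperiodicOn (fun t ht => ?_) hAτ'
  rw [hAτ t ht, hττ, neg_sub]

section Components

variable {X : Type*} [TopologicalSpace X]

theorem closure_inter_subset_connectedComponentIn (F : Set X) (x : X) :
    closure (connectedComponentIn F x) ∩ F ⊆ connectedComponentIn F x := by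
  by_cases hx : x ∈ F
  · exact (isPreconnected_connectedComponentIn.subset_closure
      (subset_inter subset_closure (connectedComponentIn_subset _ _)) inter_subset_left)
      |>.subset_connectedComponentIn ⟨subset_closure (mem_connectedComponentIn hx), hx⟩
        inter_subset_right
  · simp [connectedComponentIn_eq_empty hx]

theorem IsCompact.connectedComponentIn [T2Space X] {F : Set X} (hF : IsCompact F) (x : X) :
    IsCompact (connectedComponentIn F x) := by
  refine hF.of_isClosed_subset (isClosed_of_closure_subset fun y hy => ?_)
    (connectedComponentIn_subset _ _)
  exact closure_inter_subset_connectedComponentIn F x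
    ⟨hy, closure_minimal (connectedComponentIn_subset _ _) hF.isClosed hy⟩

theorem Set.MapsTo.connectedComponentIn {τ : X → X} {F : Set X} (hτ : Continuous τ)
    (hF : MapsTo τ F F) {x : X} (hx : x ∈ F) :
    MapsTo τ (connectedComponentIn F x) (connectedComponentIn F (τ x)) :=
  (hτ.continuousOn.mapsTo_connectedComponentIn hx).mono_right
    (connectedComponentIn_mono _ hF.image_subset)

theorem isConnected_of_forall_mem_connectedComponentIn {S : Set X} {c : X} (hc : c ∈ S)
    (h : ∀ x ∈ S, c ∈ connectedComponentIn S x) : IsConnected S :=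
  ⟨⟨c, hc⟩, isPreconnected_of_forall c fun x hx => ⟨_, connectedComponentIn_subset _ _, h x hx,
    mem_connectedComponentIn hx, isPreconnected_connectedComponentIn⟩⟩

theorem isConnected_preimage_of_image_connectedComponentIn {Y : Type*} {f : X → Y} {S : Set Y}
    {c : X} (hfc : ∀ x, f x = f c → x = c) (hcS : f c ∈ S)
    (hS : ∀ x ∈ f ⁻¹' S, f '' connectedComponentIn (f ⁻¹' S) x = S) : IsConnected (f ⁻¹' S) :=
  isConnected_of_forall_mem_connectedComponentIn hcS fun x hx => by
    obtain ⟨y, hy, hyc⟩ := (hS x hx).symm ▸ hcS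
    rwa [hfc y hyc] at hy

theorem IsProperMap.image_connectedComponentIn_preimage [LocallyConnectedSpace X] {Y : Type*}
    [TopologicalSpace Y] {f : X → Y} (hf : IsProperMap f) (hopen : IsOpenMap f) {U : Set Y}
    (hU : IsOpen U) (hUc : IsPreconnected U) {x : X} (hx : f x ∈ U) :
    f '' connectedComponentIn (f ⁻¹' U) x = U := by
  set C := connectedComponentIn (f ⁻¹' U) x
  refine (image_subset_iff.2 (connectedComponentIn_subset _ _)).antisymm
    (hUc.subset_of_closure_inter_subset (hopen _ (hU.preimage hf.continuous).connectedComponentIn)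
      ⟨f x, hx, x, mem_connectedComponentIn hx, rfl⟩ ?_)
  rintro _ ⟨hy, hyU⟩
  obtain ⟨z, hz, rfl⟩ := hf.isClosedMap.closure_image_subset C hy
  exact mem_image_of_mem f (closure_inter_subset_connectedComponentIn _ _ ⟨hz, hyU⟩)

theorem IsProperMap.surjective_of_isOpenMap {Y : Type*} [TopologicalSpace Y]
    [PreconnectedSpace Y] [Nonempty X] {f : X → Y} (hf : IsProperMap f) (hopen : IsOpenMap f) :
    Surjective f :=
  range_eq_univ.1 (IsClopen.eq_univ ⟨hf.isClosedMap.isClosed_range, hopen.isOpen_range⟩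
    (range_nonempty f))

theorem exists_homeomorph_of_injOn {Y : Type*} [TopologicalSpace Y] [T2Space Y] {f : X → Y}
    (hf : Continuous f) {A : Set X} {K : Set Y} (hA : IsCompact A) (hfA : f '' A = K)
    (hinj : InjOn f A) :
    ∃ e : A ≃ₜ K, ∀ a, (e a : Y) = f a := by
  have : CompactSpace A := isCompact_iff_compactSpace.1 hA
  have hbij : BijOn f A K := ⟨hfA ▸ mapsTo_image f A, hinj, hfA ▸ surjOn_image f A⟩
  exact ⟨(hf.comp continuous_subtype_val).subtype_mk _ |>.homeoOfEquivCompactToT2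
    (f := hbij.equiv f), fun _ => rfl⟩

theorem connectedComponentIn_disjoint {F : Set X} {x y : X}
    (h : connectedComponentIn F x ≠ connectedComponentIn F y) :
    Disjoint (connectedComponentIn F x) (connectedComponentIn F y) :=
  disjoint_left.2 fun _ hx hy =>
    h ((connectedComponentIn_eq hx).trans (connectedComponentIn_eq hy).symm)

theorem connectedComponentIn_union_connectedComponentIn_apply {Y : Type*} {f : X → Y}
    {τ : X → X} (hfib : ∀ x y, f x = f y → y = x ∨ y = τ x) {K : Set Y}
    (hK : ∀ z ∈ f ⁻¹' K, f '' connectedComponentIn (f ⁻¹' K) z = K) {x : X} (hx : f x ∈ K) :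
    connectedComponentIn (f ⁻¹' K) x ∪ connectedComponentIn (f ⁻¹' K) (τ x) = f ⁻¹' K := by
  refine union_subset (connectedComponentIn_subset _ _) (connectedComponentIn_subset _ _)
    |>.antisymm fun z hz => ?_
  obtain ⟨y, hy, hyx⟩ := (hK z hz).symm ▸ hx
  have hzy := connectedComponentIn_eq hy ▸ mem_connectedComponentIn hz
  rcases hfib x y hyx.symm with rfl | rfl
  exacts [.inl hzy, .inr hzy]

end Components

theorem injOn_of_mapsTo_of_disjoint {X Y : Type*} {f : X → Y} {τ : X → X}
    (hfib : ∀ x y, f x = f y → y = x ∨ y = τ x) {A B : Set X}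
    (hτ : MapsTo τ A B) (hAB : Disjoint A B) : InjOn f A := fun a ha b hb hab =>
  ((hfib a b hab).resolve_right fun h => disjoint_left.1 hAB hb (h ▸ hτ ha)).symm

theorem connectedComponentIn_ne_of_involutive {τ : ℂ → ℂ} {c : ℂ} (hτ : Continuous τ)
    (hττ : Involutive τ) (hfix : ∀ z, τ z = z → z = c) {X : Set ℂ} (hX : IsCompact X)
    (hXτ : MapsTo τ X X) (hcX : c ∉ X) (hXc : IsConnected Xᶜ) {x : ℂ} (hx : x ∈ X) :
    connectedComponentIn X (τ x) ≠ connectedComponentIn X x := by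
  intro hAτ
  set A := connectedComponentIn X x
  obtain ⟨R, hR, hXR⟩ := hX.isBounded.subset_ball_lt 0 0
  let w : ℂ := R
  have hw : ‖w‖ = R := by simp [w, hR.le]
  have hwX : w ∉ X := fun h => by simpa [hw] using hXR h
  obtain ⟨γ, hγ⟩ := (hX.isClosed.isOpen_compl.isConnected_iff_isPathConnected.1 hXc).joinedIn
    c hcX w hwX
  let O := (range γ)ᶜ ∩ Metric.ball 0 R ∩ τ ⁻¹' ((range γ)ᶜ ∩ Metric.ball 0 R)
  have hOτ : MapsTo τ O O := fun z hz => ⟨hz.2, by simpa only [mem_preimage, hττ z] using hz.1⟩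
  have hXγ : X ⊆ (range γ)ᶜ ∩ Metric.ball 0 R := fun z hz =>
    ⟨by rintro ⟨t, rfl⟩; exact hγ t hz, hXR hz⟩
  have hAO : A ⊆ O := fun z hz => ⟨hXγ (connectedComponentIn_subset _ _ hz),
    hXγ (connectedComponentIn_subset _ _ (hAτ ▸ hXτ.connectedComponentIn hτ hx hz))⟩
  have hxA : x ∈ A := mem_connectedComponentIn hx
  have hO : IsOpen O :=
    have hγ : IsOpen ((range γ)ᶜ ∩ Metric.ball 0 R) :=
      (isCompact_range γ.continuous).isClosed.isOpen_compl.inter Metric.isOpen_ball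
    hγ.inter (hγ.preimage hτ)
  let G := connectedComponentIn O x
  have hAG : A ⊆ G := isPreconnected_connectedComponentIn.subset_connectedComponentIn hxA hAO
  have hτxA : τ x ∈ A := hAτ ▸ mem_connectedComponentIn (hXτ hx)
  have hGτ : MapsTo τ G G := by
    have := hOτ.connectedComponentIn hτ (hAO hxA)
    rwa [← connectedComponentIn_eq (hAG hτxA)] at this
  have hG : IsPathConnected G := hO.connectedComponentIn.isConnected_iff_isPathConnected.1
    (isConnected_connectedComponentIn_iff.2 (hAO hxA))
  obtain ⟨t, ht⟩ := hG.exists_path_apply_mem_of_involutive hτ hττ hfix hGτ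
    (fun z hz => hw ▸ mem_ball_zero_iff.1 (connectedComponentIn_subset _ _ hz).1.2) γ
  exact (connectedComponentIn_subset _ _ ht).1.1 (mem_range_self t)

theorem pullbacks_of_nonseparating_continuum
    (f τ : ℂ → ℂ) (c : ℂ)
    (hf : Continuous f) (hopen : IsOpenMap f)
    (hperfect : ∀ K : Set ℂ, IsCompact K → IsCompact (f ⁻¹' K))
    (hτ : Continuous τ) (hττ : ∀ x, τ (τ x) = x) (hfτ : ∀ x, f (τ x) = f x)
    (hfib : ∀ x y, f x = f y → y = x ∨ y = τ x)
    (hc : τ c = c) (hcuniq : ∀ x, τ x = x → x = c)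
    (hconf : Confluent f)
    (K : Set ℂ) (hK : IsContinuum K) (hKns : IsConnected Kᶜ) :
    (f c ∉ K →
      ∃ A B : Set ℂ, IsComponentOf A (f ⁻¹' K) ∧ IsComponentOf B (f ⁻¹' K) ∧
        A ≠ B ∧ Disjoint A B ∧ A ∪ B = f ⁻¹' K ∧
        (∃ eA : A ≃ₜ K, ∀ a : A, (eA a : ℂ) = f a) ∧
        (∃ eB : B ≃ₜ K, ∀ b : B, (eB b : ℂ) = f b)) ∧
    (f c ∈ K → IsConnected (f ⁻¹' K) ∧ c ∈ f ⁻¹' K) := by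
  have hproper : IsProperMap f := isProperMap_iff_isCompact_preimage.2 ⟨hf, hperfect⟩
  have hfc : ∀ x, f x = f c → x = c := fun x h => (hfib c x h.symm).elim id (·.trans hc)
  have hKimage : ∀ x ∈ f ⁻¹' K, f '' connectedComponentIn (f ⁻¹' K) x = K :=
    fun x hx => hconf K _ hK ⟨x, hx, rfl⟩
  refine ⟨fun hv => ?_, fun hv =>
    ⟨isConnected_preimage_of_image_connectedComponentIn hfc hv hKimage, hv⟩⟩
  have hXτ : MapsTo τ (f ⁻¹' K) (f ⁻¹' K) := fun x hx => by rwa [mem_preimage, hfτ]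
  have hXc : IsConnected (f ⁻¹' K)ᶜ := isConnected_preimage_of_image_connectedComponentIn hfc hv
    fun x hx => hproper.image_connectedComponentIn_preimage hopen hK.1.isClosed.isOpen_compl
      hKns.isPreconnected hx
  obtain ⟨x, hx⟩ : ∃ x, f x ∈ K := by
    obtain ⟨k, hk⟩ := hK.2.nonempty
    obtain ⟨x, rfl⟩ := hproper.surjective_of_isOpenMap hopen k
    exact ⟨x, hk⟩
  have hAB := (connectedComponentIn_ne_of_involutive hτ hττ hcuniq (hperfect K hK.1) hXτ hv hXc
    hx).symm
  have hτA := hXτ.connectedComponentIn hτ hx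
  have hτB := hττ x ▸ hXτ.connectedComponentIn hτ (hXτ hx)
  have hdisj := connectedComponentIn_disjoint hAB
  refine ⟨_, _, ⟨x, hx, rfl⟩, ⟨τ x, hXτ hx, rfl⟩, hAB, hdisj,
    connectedComponentIn_union_connectedComponentIn_apply hfib hKimage hx, ?_, ?_⟩
  · exact exists_homeomorph_of_injOn hf ((hperfect K hK.1).connectedComponentIn x) (hKimage x hx)
      (injOn_of_mapsTo_of_disjoint hfib hτA hdisj)
  · exact exists_homeomorph_of_injOn hf ((hperfect K hK.1).connectedComponentIn _)
      (hKimage _ (hXτ hx)) (injOn_of_mapsTo_of_disjoint hfib hτB hdisj.symm)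
end

section
/- Let (f, τ, c) be degree −2 branched covering data, and assume f is confluent and oriented. Suppose U ⊆ ℂ is a simply connected open domain such that f(U) is also simply connected. If the restriction f|_U is not injective, then the critical point c belongs to U. -/
open Set Topology Bornology

/-- The topological hull `T(Y)`: the complement of the unbounded connected
component of `ℂ \ Y`. -/
def hullC (Y : Set ℂ) : Set ℂ := {z | IsBounded (connectedComponentIn Yᶜ z)}

section DoubleCoverLifting

/-- A "chart" for the double cover structure: an open set on which `f` is injective,
whose full `f`-preimage of its image is exactly `A ∪ τ '' A`, disjointly. -/
def IsChartOf (f τ : ℂ → ℂ) (A : Set ℂ) : Prop :=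
  IsOpen A ∧ Set.InjOn f A ∧ Disjoint A (τ '' A) ∧ f ⁻¹' (f '' A) = A ∪ τ '' A

variable {f τ : ℂ → ℂ} {c : ℂ}

lemma chart_exists (hτ : Continuous τ) (hfτ : ∀ x, f (τ x) = f x)
    (hfib : ∀ x y, f x = f y → y = x ∨ y = τ x)
    (hcuniq : ∀ x, τ x = x → x = c)
    {x : ℂ} (hx : x ≠ c) : ∃ A : Set ℂ, IsChartOf f τ A ∧ x ∈ A := by
  have hxτ : x ≠ τ x := fun h => hx (hcuniq x h.symm)
  obtain ⟨u, v, hu, hv, hxu, hτxv, huv⟩ := t2_separation hxτ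
  refine ⟨u ∩ τ ⁻¹' v, ⟨hu.inter (hv.preimage hτ), ?_, ?_, ?_⟩, hxu, hτxv⟩
  · -- InjOn
    rintro p ⟨hpu, hpv⟩ q ⟨hqu, hqv⟩ hpq
    rcases hfib p q hpq with h | h
    · exact h.symm
    · exact absurd hqu (by rw [h]; exact disjoint_right.mp huv hpv)
  · -- Disjoint
    refine Set.disjoint_left.mpr ?_
    rintro z ⟨hzu, _⟩ ⟨w, ⟨_, hwv⟩, hwz⟩
    exact disjoint_left.mp huv hzu (hwz ▸ hwv)
  · -- preimage identity
    ext z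
    constructor
    · rintro ⟨a, haA, hfa⟩
      rcases hfib a z hfa with h | h
      · exact Or.inl (h ▸ haA)
      · exact Or.inr ⟨a, haA, h.symm⟩
    · rintro (hz | ⟨a, haA, haz⟩)
      · exact ⟨z, hz, rfl⟩
      · exact ⟨a, haA, by rw [← haz, hfτ]⟩

lemma chart_symm (hτ : Continuous τ) (hττ : ∀ x, τ (τ x) = x) (hfτ : ∀ x, f (τ x) = f x)
    {A : Set ℂ} (hA : IsChartOf f τ A) :
    IsChartOf f τ (τ '' A) ∧ f '' (τ '' A) = f '' A := by
  obtain ⟨hAo, hinj, hdisj, hpre⟩ := hA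
  have hτinv : ∀ B : Set ℂ, τ '' B = τ ⁻¹' B := by
    intro B
    ext z
    constructor
    · rintro ⟨w, hw, rfl⟩; simpa [hττ w] using hw
    · intro hz; exact ⟨τ z, hz, hττ z⟩
  have hττA : τ '' (τ '' A) = A := by
    rw [← Set.image_comp]
    have : τ ∘ τ = id := funext hττ
    rw [this, Set.image_id]
  have himg : f '' (τ '' A) = f '' A := by
    rw [← Set.image_comp]
    have : f ∘ τ = f := funext hfτ
    rw [this]
  refine ⟨⟨?_, ?_, ?_, ?_⟩, himg⟩
  · rw [hτinv]; exact hAo.preimage hτ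
  · rintro p ⟨p', hp', rfl⟩ q ⟨q', hq', rfl⟩ hpq
    rw [hfτ, hfτ] at hpq
    rw [hinj hp' hq' hpq]
  · rw [hττA]; exact hdisj.symm
  · rw [himg, hpre, hττA, Set.union_comm]

lemma chart_locate (hτ : Continuous τ) (hττ : ∀ x, τ (τ x) = x) (hfτ : ∀ x, f (τ x) = f x)
    {A : Set ℂ} (hA : IsChartOf f τ A) {x : ℂ} (hx : f x ∈ f '' A) :
    ∃ A' : Set ℂ, IsChartOf f τ A' ∧ x ∈ A' ∧ f '' A' = f '' A := by
  have : x ∈ f ⁻¹' (f '' A) := hx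
  rw [hA.2.2.2] at this
  rcases this with h | h
  · exact ⟨A, hA, h, rfl⟩
  · obtain ⟨hchart, himg⟩ := chart_symm hτ hττ hfτ hA
    exact ⟨τ '' A, hchart, h, himg⟩

lemma chart_inv (hf : Continuous f) (hopen : IsOpenMap f)
    {A : Set ℂ} (hA : IsChartOf f τ A) :
    ∃ ψ : ℂ → ℂ, ContinuousOn ψ (f '' A) ∧ (∀ y ∈ f '' A, ψ y ∈ A ∧ f (ψ y) = y) ∧
      ∀ x ∈ A, ψ (f x) = x := by
  obtain ⟨hAo, hinj, -, -⟩ := hA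
  have hmem : ∀ y ∈ f '' A, Function.invFunOn f A y ∈ A := fun y hy =>
    Function.invFunOn_mem ((Set.mem_image _ _ _).mp hy)
  have heq : ∀ y ∈ f '' A, f (Function.invFunOn f A y) = y := fun y hy =>
    Function.invFunOn_eq ((Set.mem_image _ _ _).mp hy)
  have hback : ∀ x ∈ A, Function.invFunOn f A (f x) = x := by
    intro x hx
    have h1 : f x ∈ f '' A := ⟨x, hx, rfl⟩
    exact hinj (hmem _ h1) hx (heq _ h1)
  refine ⟨Function.invFunOn f A, ?_, fun y hy => ⟨hmem y hy, heq y hy⟩, hback⟩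
  rw [continuousOn_iff']
  intro t ht
  refine ⟨f '' (A ∩ t), hopen _ (hAo.inter ht), ?_⟩
  ext y
  constructor
  · rintro ⟨hyt, hyA⟩
    exact ⟨⟨_, ⟨hmem y hyA, hyt⟩, heq y hyA⟩, hyA⟩
  · rintro ⟨⟨x, ⟨hxA, hxt⟩, rfl⟩, hyA⟩
    refine ⟨?_, hyA⟩
    show Function.invFunOn f A (f x) ∈ t
    rw [hback x hxA]; exact hxt

lemma lift_unique {X : Type*} [TopologicalSpace X]
    (hτ : Continuous τ)
    (hfib : ∀ x y, f x = f y → y = x ∨ y = τ x)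
    (hcuniq : ∀ x, τ x = x → x = c)
    {S : Set X} (hS : IsPreconnected S)
    {g₁ g₂ : X → ℂ}
    (h₁ : ContinuousOn g₁ S) (h₂ : ContinuousOn g₂ S)
    (hl : ∀ s ∈ S, f (g₁ s) = f (g₂ s))
    (hnc : ∀ s ∈ S, g₁ s ≠ c)
    {s₀ : X} (hs₀ : s₀ ∈ S) (heq : g₁ s₀ = g₂ s₀) :
    Set.EqOn g₁ g₂ S := by
  haveI := Subtype.preconnectedSpace hS
  set E : Set S := {z | g₁ (z : X) = g₂ (z : X)} with hE
  have hclosed : IsClosed E := isClosed_eq h₁.restrict h₂.restrict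
  have hcover : ∀ z : S, z ∈ E ∨ g₂ (z : X) = τ (g₁ (z : X)) := by
    intro z
    rcases hfib (g₁ z) (g₂ z) (hl z z.2) with h | h
    · exact Or.inl h.symm
    · exact Or.inr h
  have hdisj : ∀ z : S, z ∈ E → g₂ (z : X) = τ (g₁ (z : X)) → False := by
    intro z h1 h2
    have : τ (g₁ (z : X)) = g₁ (z : X) := by rw [← h2, ← h1]
    exact hnc z z.2 (hcuniq _ this)
  have hopenE : IsOpen E := by
    rw [← isClosed_compl_iff]
    have : Eᶜ = {z : S | g₂ (z : X) = τ (g₁ (z : X))} := by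
      ext z
      constructor
      · intro hz
        rcases hcover z with h | h
        · exact absurd h hz
        · exact h
      · intro hz hzE
        exact hdisj z hzE hz
    rw [this]
    exact isClosed_eq h₂.restrict (hτ.comp h₁.restrict)
  have huniv : E = univ := IsClopen.eq_univ ⟨hclosed, hopenE⟩ ⟨⟨s₀, hs₀⟩, heq⟩
  intro x hx
  exact (show (⟨x, hx⟩ : S) ∈ E from huniv ▸ mem_univ _)

lemma glue_lift {D Q : Set (ℝ × ℝ)} (hD : IsClosed D) (hQ : IsClosed Q)
    {G g : ℝ × ℝ → ℂ} (hG : ContinuousOn G D) (hg : ContinuousOn g Q)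
    (hagree : Set.EqOn G g (D ∩ Q)) :
    ∃ G₂ : ℝ × ℝ → ℂ, ContinuousOn G₂ (D ∪ Q) ∧ Set.EqOn G₂ G D ∧ Set.EqOn G₂ g Q := by
  classical
  set F : ℝ × ℝ → ℂ := fun q => if q ∈ D then G q else g q with hF
  have hFD : Set.EqOn F G D := fun q hq => if_pos hq
  have hFQ : Set.EqOn F g Q := by
    intro q hq
    by_cases h : q ∈ D
    · simpa [hF, h] using hagree ⟨h, hq⟩
    · simp [hF, h]
  have hcD : ContinuousOn F D := hG.congr hFD
  have hcQ : ContinuousOn F Q := hg.congr hFQ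
  refine ⟨F, ?_, hFD, hFQ⟩
  intro x hx
  have h1 : ContinuousWithinAt F D x := by
    by_cases h : x ∈ D
    · exact hcD x h
    · exact continuousWithinAt_of_notMem_closure (by rwa [hD.closure_eq])
  have h2 : ContinuousWithinAt F Q x := by
    by_cases h : x ∈ Q
    · exact hcQ x h
    · exact continuousWithinAt_of_notMem_closure (by rwa [hQ.closure_eq])
  exact h1.union h2

lemma row_lift
    (hf : Continuous f) (hopen : IsOpenMap f)
    (hτ : Continuous τ) (hττ : ∀ x, τ (τ x) = x) (hfτ : ∀ x, f (τ x) = f x)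
    (hfib : ∀ x y, f x = f y → y = x ∨ y = τ x)
    (hcuniq : ∀ x, τ x = x → x = c)
    {H : ℝ × ℝ → ℂ} (hH : Continuous H)
    {n : ℕ} (hn : 0 < n) {t₀ t₁ : ℝ} (ht : t₀ ≤ t₁)
    (hHv : ∀ q ∈ Icc (0:ℝ) 1 ×ˢ Icc t₀ t₁, H q ≠ f c)
    (hgrid : ∀ i : ℕ, i < n → ∃ A, IsChartOf f τ A ∧
        ∀ q ∈ Icc ((i:ℝ)/n) (((i:ℝ)+1)/n) ×ˢ Icc t₀ t₁, H q ∈ f '' A)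
    {p : ℝ → ℂ} (hp : ContinuousOn p (Icc 0 1))
    (hpl : ∀ s ∈ Icc (0:ℝ) 1, f (p s) = H (s, t₀)) :
    ∃ G : ℝ × ℝ → ℂ, ContinuousOn G (Icc 0 1 ×ˢ Icc t₀ t₁) ∧
      (∀ q ∈ Icc (0:ℝ) 1 ×ˢ Icc t₀ t₁, f (G q) = H q) ∧
      (∀ s ∈ Icc (0:ℝ) 1, G (s, t₀) = p s) := by
  have hn' : (0:ℝ) < n := by exact_mod_cast hn
  have hdiv_nonneg : ∀ k : ℕ, (0:ℝ) ≤ (k:ℝ)/n := fun k => by positivity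
  have hdiv_le_one : ∀ k : ℕ, k ≤ n → (k:ℝ)/n ≤ 1 := fun k hk =>
    (div_le_one hn').mpr (by exact_mod_cast hk)
  have hstep : ∀ k : ℕ, (k:ℝ)/n ≤ ((k:ℝ)+1)/n := fun k =>
    (div_le_div_iff_of_pos_right hn').mpr (by linarith)
  have hsucc_le_one : ∀ k : ℕ, k < n → ((k:ℝ)+1)/n ≤ 1 := fun k hk => by
    rw [div_le_one hn']
    have : ((k:ℝ)+1) = ((k+1 : ℕ) : ℝ) := by push_cast; ring
    rw [this]
    exact_mod_cast hk
  have ht₀J : t₀ ∈ Icc t₀ t₁ := left_mem_Icc.mpr ht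
  -- the i-th square
  set Q : ℕ → Set (ℝ × ℝ) :=
    fun i => Icc ((i:ℝ)/n) (((i:ℝ)+1)/n) ×ˢ Icc t₀ t₁ with hQdef
  have hQsub : ∀ i : ℕ, i < n → Q i ⊆ Icc (0:ℝ) 1 ×ˢ Icc t₀ t₁ := fun i hi =>
    Set.prod_mono (Icc_subset_Icc (hdiv_nonneg i) (hsucc_le_one i hi)) Subset.rfl
  have hcornerQ : ∀ i : ℕ, ((i:ℝ)/n, t₀) ∈ Q i := fun i =>
    ⟨left_mem_Icc.mpr (hstep i), ht₀J⟩
  -- one extension step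
  have extend : ∀ i : ℕ, i < n → ∀ D : Set (ℝ × ℝ), IsClosed D →
      D ⊆ Icc (0:ℝ) 1 ×ˢ Icc t₀ t₁ →
      IsPreconnected (D ∩ Q i) →
      ((i:ℝ)/n, t₀) ∈ D →
      ∀ G : ℝ × ℝ → ℂ, ContinuousOn G D → (∀ q ∈ D, f (G q) = H q) →
      ∃ G', ContinuousOn G' (D ∪ Q i) ∧ (∀ q ∈ D ∪ Q i, f (G' q) = H q) ∧
        Set.EqOn G' G D := by
    intro i hi D hDc hDsub hconn hcorner G hGc hGl
    obtain ⟨A, hA, hAim⟩ := hgrid i hi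
    have hx₀ : f (G ((i:ℝ)/n, t₀)) ∈ f '' A := by
      rw [hGl _ hcorner]; exact hAim _ (hcornerQ i)
    obtain ⟨A', hA', hxA', himg⟩ := chart_locate hτ hττ hfτ hA hx₀
    obtain ⟨ψ, hψc, hψspec, hψback⟩ := chart_inv hf hopen hA'
    have himg' : ∀ q ∈ Q i, H q ∈ f '' A' := by
      intro q hq; rw [himg]; exact hAim q hq
    have hgc : ContinuousOn (fun q => ψ (H q)) (Q i) :=
      hψc.comp hH.continuousOn himg'
    have hgl : ∀ q ∈ Q i, f (ψ (H q)) = H q := fun q hq => (hψspec _ (himg' q hq)).2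
    have hgq : ψ (H ((i:ℝ)/n, t₀)) = G ((i:ℝ)/n, t₀) := by
      rw [show H ((i:ℝ)/n, t₀) = f (G ((i:ℝ)/n, t₀)) from (hGl _ hcorner).symm]
      exact hψback _ hxA'
    have hagree : Set.EqOn G (fun q => ψ (H q)) (D ∩ Q i) :=
      lift_unique hτ hfib hcuniq hconn (hGc.mono inter_subset_left)
        (hgc.mono inter_subset_right)
        (fun q hq => by rw [hGl q hq.1, hgl q hq.2])
        (fun q hq hc' => hHv q (hDsub hq.1) ((hGl q hq.1).symm.trans (congrArg f hc')))
        ⟨hcorner, hcornerQ i⟩ hgq.symm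
    obtain ⟨G', hG'c, hG'D, hG'Q⟩ :=
      glue_lift hDc (isClosed_Icc.prod isClosed_Icc) hGc hgc hagree
    refine ⟨G', hG'c, ?_, hG'D⟩
    intro q hq
    rcases hq with hq | hq
    · rw [hG'D hq]; exact hGl q hq
    · rw [hG'Q hq]; exact hgl q hq
  -- the inductive construction
  have key : ∀ i : ℕ, 1 ≤ i → i ≤ n →
      ∃ G : ℝ × ℝ → ℂ,
        ContinuousOn G (Icc (0:ℝ) 1 ×ˢ ({t₀} : Set ℝ) ∪ Icc (0:ℝ) ((i:ℝ)/n) ×ˢ Icc t₀ t₁) ∧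
        (∀ q ∈ Icc (0:ℝ) 1 ×ˢ ({t₀} : Set ℝ) ∪ Icc (0:ℝ) ((i:ℝ)/n) ×ˢ Icc t₀ t₁,
          f (G q) = H q) ∧
        (∀ s ∈ Icc (0:ℝ) 1, G (s, t₀) = p s) := by
    intro i h1
    induction i, h1 using Nat.le_induction with
    | base =>
      intro hin
      have h1n : (1:ℝ)/(n:ℝ) ≤ 1 := by
        rw [div_le_one hn']; exact_mod_cast hn
      have hQ0 : Q 0 = Icc (0:ℝ) (1/(n:ℝ)) ×ˢ Icc t₀ t₁ := by rw [hQdef]; norm_num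
      have hG0c : ContinuousOn (fun q : ℝ × ℝ => p q.1) (Icc (0:ℝ) 1 ×ˢ ({t₀} : Set ℝ)) :=
        hp.comp continuous_fst.continuousOn (fun q hq => hq.1)
      have hG0l : ∀ q ∈ Icc (0:ℝ) 1 ×ˢ ({t₀} : Set ℝ), f ((fun q : ℝ × ℝ => p q.1) q) = H q := by
        rintro ⟨s, t⟩ ⟨hs, ht'⟩
        have ht'' : t = t₀ := ht'
        subst ht''
        exact hpl s hs
      have hconn : IsPreconnected (Icc (0:ℝ) 1 ×ˢ ({t₀} : Set ℝ) ∩ Q 0) := by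
        rw [hQ0, Set.prod_inter_prod]
        have h1 : Icc (0:ℝ) 1 ∩ Icc (0:ℝ) (1/(n:ℝ)) = Icc (0:ℝ) (1/(n:ℝ)) := by
          rw [Icc_inter_Icc, min_eq_right h1n]
          norm_num
        have h2 : ({t₀} : Set ℝ) ∩ Icc t₀ t₁ = {t₀} :=
          inter_eq_self_of_subset_left (singleton_subset_iff.mpr ht₀J)
        rw [h1, h2]
        exact ((convex_Icc _ _).prod (convex_singleton _)).isPreconnected
      have hcorner : (((0:ℕ):ℝ)/n, t₀) ∈ Icc (0:ℝ) 1 ×ˢ ({t₀} : Set ℝ) := by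
        constructor
        · simp only [Nat.cast_zero, zero_div]
          exact left_mem_Icc.mpr zero_le_one
        · exact rfl
      obtain ⟨G', hG'c, hG'l, hG'D⟩ := extend 0 hn _
        (isClosed_Icc.prod isClosed_singleton)
        (Set.prod_mono Subset.rfl (singleton_subset_iff.mpr ht₀J))
        hconn hcorner _ hG0c hG0l
      have hE1 : Icc (0:ℝ) 1 ×ˢ ({t₀} : Set ℝ) ∪ Icc (0:ℝ) (((1:ℕ):ℝ)/n) ×ˢ Icc t₀ t₁ =
          Icc (0:ℝ) 1 ×ˢ ({t₀} : Set ℝ) ∪ Q 0 := by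
        rw [hQ0]; norm_num
      rw [hE1]
      refine ⟨G', hG'c, hG'l, ?_⟩
      intro s hs
      exact hG'D (show (s, t₀) ∈ Icc (0:ℝ) 1 ×ˢ ({t₀} : Set ℝ) from ⟨hs, rfl⟩)
    | succ i hi1 ih =>
      intro hin
      have hi_lt : i < n := Nat.lt_of_succ_le hin
      obtain ⟨G, hGc, hGl, hGb⟩ := ih hi_lt.le
      set E : Set (ℝ × ℝ) :=
        Icc (0:ℝ) 1 ×ˢ ({t₀} : Set ℝ) ∪ Icc (0:ℝ) ((i:ℝ)/n) ×ˢ Icc t₀ t₁ with hEdef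
      have hEc : IsClosed E :=
        (isClosed_Icc.prod isClosed_singleton).union (isClosed_Icc.prod isClosed_Icc)
      have hEsub : E ⊆ Icc (0:ℝ) 1 ×ˢ Icc t₀ t₁ :=
        union_subset (Set.prod_mono Subset.rfl (singleton_subset_iff.mpr ht₀J))
          (Set.prod_mono (Icc_subset_Icc le_rfl (hdiv_le_one i hi_lt.le)) Subset.rfl)
      have hoverlap : E ∩ Q i =
          Icc ((i:ℝ)/n) (((i:ℝ)+1)/n) ×ˢ ({t₀} : Set ℝ) ∪
            ({(i:ℝ)/n} : Set ℝ) ×ˢ Icc t₀ t₁ := by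
        have hsing : ({t₀} : Set ℝ) ∩ Icc t₀ t₁ = {t₀} :=
          inter_eq_self_of_subset_left (singleton_subset_iff.mpr ht₀J)
        rw [hEdef, hQdef, Set.union_inter_distrib_right, Set.prod_inter_prod,
          Set.prod_inter_prod, hsing, inter_self, Icc_inter_Icc, Icc_inter_Icc,
          max_eq_right (hdiv_nonneg i), min_eq_right (hsucc_le_one i hi_lt),
          min_eq_left (hstep i), Icc_self]
      have hconn : IsPreconnected (E ∩ Q i) := by
        rw [hoverlap]
        refine IsPreconnected.union ((i:ℝ)/n, t₀) ⟨?_, ?_⟩ ⟨?_, ?_⟩ ?_ ?_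
        · exact left_mem_Icc.mpr (hstep i)
        · exact rfl
        · exact rfl
        · exact ht₀J
        · exact ((convex_Icc _ _).prod (convex_singleton _)).isPreconnected
        · exact ((convex_singleton _).prod (convex_Icc _ _)).isPreconnected
      have hcorner : ((i:ℝ)/n, t₀) ∈ E := by
        refine Or.inl ⟨⟨hdiv_nonneg i, hdiv_le_one i hi_lt.le⟩, ?_⟩
        exact rfl
      obtain ⟨G', hG'c, hG'l, hG'D⟩ := extend i hi_lt E hEc hEsub hconn hcorner G hGc hGl
      have hEQ : E ∪ Q i =
          Icc (0:ℝ) 1 ×ˢ ({t₀} : Set ℝ) ∪ Icc (0:ℝ) (((i+1:ℕ):ℝ)/n) ×ˢ Icc t₀ t₁ := by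
        have hcast : ((i+1:ℕ):ℝ) = (i:ℝ)+1 := by push_cast; ring
        rw [hcast, hEdef, hQdef, union_assoc, ← Set.union_prod,
          Icc_union_Icc_eq_Icc (hdiv_nonneg i) (hstep i)]
      rw [← hEQ]
      refine ⟨G', hG'c, hG'l, ?_⟩
      intro s hs
      rw [hG'D (Or.inl (show (s, t₀) ∈ Icc (0:ℝ) 1 ×ˢ ({t₀} : Set ℝ) from ⟨hs, rfl⟩))]
      exact hGb s hs
  obtain ⟨G, hGc, hGl, hGb⟩ := key n hn le_rfl
  have hnn : ((n:ℕ):ℝ)/n = 1 := div_self hn'.ne'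
  have hsub : Icc (0:ℝ) 1 ×ˢ Icc t₀ t₁ ⊆
      Icc (0:ℝ) 1 ×ˢ ({t₀} : Set ℝ) ∪ Icc (0:ℝ) (((n:ℕ):ℝ)/n) ×ˢ Icc t₀ t₁ := by
    rw [hnn]
    exact subset_union_right
  exact ⟨G, hGc.mono hsub, fun q hq => hGl q (hsub hq), hGb⟩

lemma square_lift
    (hf : Continuous f) (hopen : IsOpenMap f)
    (hτ : Continuous τ) (hττ : ∀ x, τ (τ x) = x) (hfτ : ∀ x, f (τ x) = f x)
    (hfib : ∀ x y, f x = f y → y = x ∨ y = τ x)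
    (hcuniq : ∀ x, τ x = x → x = c)
    {H : ℝ × ℝ → ℂ} (hH : Continuous H)
    (hHv : ∀ q ∈ Icc (0:ℝ) 1 ×ˢ Icc (0:ℝ) 1, H q ≠ f c)
    (hsur : ∀ q ∈ Icc (0:ℝ) 1 ×ˢ Icc (0:ℝ) 1, ∃ x, f x = H q)
    {p : ℝ → ℂ} (hp : Continuous p)
    (hpl : ∀ s ∈ Icc (0:ℝ) 1, f (p s) = H (s, 0)) :
    ∃ G : ℝ × ℝ → ℂ, ContinuousOn G (Icc 0 1 ×ˢ Icc 0 1) ∧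
      (∀ q ∈ Icc (0:ℝ) 1 ×ˢ Icc (0:ℝ) 1, f (G q) = H q) ∧
      (∀ s ∈ Icc (0:ℝ) 1, G (s, 0) = p s) := by
  -- Lebesgue number argument
  have hcov : ∀ q : (Icc (0:ℝ) 1 ×ˢ Icc (0:ℝ) 1 : Set (ℝ × ℝ)),
      ∃ A : Set ℂ, IsChartOf f τ A ∧ H (q : ℝ × ℝ) ∈ f '' A := by
    rintro ⟨q, hq⟩
    obtain ⟨x, hx⟩ := hsur q hq
    have hxc : x ≠ c := fun h => hHv q hq (by rw [← hx, h])
    obtain ⟨A, hA, hxA⟩ := chart_exists hτ hfτ hfib hcuniq hxc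
    exact ⟨A, hA, ⟨x, hxA, hx⟩⟩
  choose A hA hAmem using hcov
  have hlebesgue := lebesgue_number_lemma_of_metric
    (s := (Icc (0:ℝ) 1 ×ˢ Icc (0:ℝ) 1 : Set (ℝ × ℝ)))
    (c := fun q => H ⁻¹' (f '' A q))
    ((isCompact_Icc).prod isCompact_Icc)
    (fun q => (hopen _ (hA q).1).preimage hH)
    (fun q hq => Set.mem_iUnion.mpr ⟨⟨q, hq⟩, hAmem ⟨q, hq⟩⟩)
  obtain ⟨δ, hδ, hball⟩ := hlebesgue
  obtain ⟨n, hnδ⟩ := exists_nat_gt (1/δ)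
  have hn : 0 < n := by
    by_contra h
    push_neg at h
    interval_cases n
    · simp at hnδ
      linarith [one_div_pos.mpr hδ]
  have hn' : (0:ℝ) < n := by exact_mod_cast hn
  have h1nδ : 1/(n:ℝ) < δ := by
    rw [div_lt_iff₀ hn']
    rw [div_lt_iff₀ hδ] at hnδ
    linarith
  have hdiv_nonneg : ∀ k : ℕ, (0:ℝ) ≤ (k:ℝ)/n := fun k => by positivity
  have hdiv_le_one : ∀ k : ℕ, k ≤ n → (k:ℝ)/n ≤ 1 := fun k hk =>
    (div_le_one hn').mpr (by exact_mod_cast hk)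
  have hstep : ∀ k : ℕ, (k:ℝ)/n ≤ ((k:ℝ)+1)/n := fun k =>
    (div_le_div_iff_of_pos_right hn').mpr (by linarith)
  have hsucc_le_one : ∀ k : ℕ, k < n → ((k:ℝ)+1)/n ≤ 1 := fun k hk => by
    rw [div_le_one hn']
    have : ((k:ℝ)+1) = ((k+1 : ℕ) : ℝ) := by push_cast; ring
    rw [this]
    exact_mod_cast hk
  have hgrid : ∀ i j : ℕ, i < n → j < n → ∃ A' : Set ℂ, IsChartOf f τ A' ∧
      ∀ q ∈ Icc ((i:ℝ)/n) (((i:ℝ)+1)/n) ×ˢ Icc ((j:ℝ)/n) (((j:ℝ)+1)/n),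
        H q ∈ f '' A' := by
    intro i j hi hj
    have hcorner : ((i:ℝ)/n, (j:ℝ)/n) ∈ (Icc (0:ℝ) 1 ×ˢ Icc (0:ℝ) 1 : Set (ℝ × ℝ)) :=
      ⟨⟨hdiv_nonneg i, hdiv_le_one i hi.le⟩, ⟨hdiv_nonneg j, hdiv_le_one j hj.le⟩⟩
    obtain ⟨q, hq⟩ := hball _ hcorner
    refine ⟨A q, hA q, ?_⟩
    rintro ⟨s, t⟩ ⟨hs, ht⟩
    obtain ⟨hsl, hsu⟩ := hs
    obtain ⟨htl, htu⟩ := ht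
    simp only at hsl hsu htl htu
    have hdist : dist ((s, t) : ℝ × ℝ) ((i:ℝ)/n, (j:ℝ)/n) < δ := by
      rw [Prod.dist_eq]
      have ei : ((i:ℝ)+1)/n = (i:ℝ)/n + 1/n := by ring
      have ej : ((j:ℝ)+1)/n = (j:ℝ)/n + 1/n := by ring
      rw [ei] at hsu
      rw [ej] at htu
      have h1 : dist s ((i:ℝ)/n) < δ := by
        rw [Real.dist_eq, abs_lt]
        constructor <;> linarith
      have h2 : dist t ((j:ℝ)/n) < δ := by
        rw [Real.dist_eq, abs_lt]
        constructor <;> linarith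
      exact max_lt h1 h2
    exact hq (Metric.mem_ball.mpr hdist)
  -- column induction
  have key : ∀ j : ℕ, 1 ≤ j → j ≤ n →
      ∃ G : ℝ × ℝ → ℂ, ContinuousOn G (Icc (0:ℝ) 1 ×ˢ Icc (0:ℝ) ((j:ℝ)/n)) ∧
        (∀ q ∈ Icc (0:ℝ) 1 ×ˢ Icc (0:ℝ) ((j:ℝ)/n), f (G q) = H q) ∧
        (∀ s ∈ Icc (0:ℝ) 1, G (s, 0) = p s) := by
    intro j h1
    induction j, h1 using Nat.le_induction with
    | base =>
      intro hjn
      have h0n : ((0:ℕ):ℝ)/n = 0 := by norm_num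
      have hrow := row_lift hf hopen hτ hττ hfτ hfib hcuniq hH hn
        (t₀ := ((0:ℕ):ℝ)/n) (t₁ := (((0:ℕ):ℝ)+1)/n)
        (by rw [h0n]; positivity)
        (fun q hq => hHv q (Set.prod_mono Subset.rfl
          (Icc_subset_Icc (by rw [h0n]) (hsucc_le_one 0 hn)) hq))
        (fun i hi => hgrid i 0 hi hn)
        hp.continuousOn
        (fun s hs => by rw [h0n]; exact hpl s hs)
      obtain ⟨G, hGc, hGl, hGb⟩ := hrow
      rw [h0n] at hGc hGl hGb
      have hcast : (((1:ℕ)):ℝ)/n = (((0:ℕ):ℝ)+1)/n := by norm_num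
      rw [hcast]
      exact ⟨G, hGc, hGl, hGb⟩
    | succ j hj1 ih =>
      intro hjn
      have hj_lt : j < n := Nat.lt_of_succ_le hjn
      obtain ⟨G, hGc, hGl, hGb⟩ := ih hj_lt.le
      have hrow := row_lift hf hopen hτ hττ hfτ hfib hcuniq hH hn
        (t₀ := ((j:ℕ):ℝ)/n) (t₁ := (((j:ℕ):ℝ)+1)/n) (hstep j)
        (fun q hq => hHv q (Set.prod_mono Subset.rfl
          (Icc_subset_Icc (hdiv_nonneg j) (hsucc_le_one j hj_lt)) hq))
        (fun i hi => hgrid i j hi hj_lt)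
        (p := fun s => G (s, (j:ℝ)/n))
        (hGc.comp (continuous_id.prodMk continuous_const).continuousOn
          (fun s hs => ⟨hs, right_mem_Icc.mpr (hdiv_nonneg j)⟩))
        (fun s hs => hGl (s, (j:ℝ)/n) ⟨hs, right_mem_Icc.mpr (hdiv_nonneg j)⟩)
      obtain ⟨G', hG'c, hG'l, hG'b⟩ := hrow
      have hagree : Set.EqOn G G'
          ((Icc (0:ℝ) 1 ×ˢ Icc (0:ℝ) ((j:ℝ)/n)) ∩
            (Icc (0:ℝ) 1 ×ˢ Icc ((j:ℝ)/n) (((j:ℝ)+1)/n))) := by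
        rintro ⟨s, t⟩ hq
        rw [Set.prod_inter_prod, inter_self, Icc_inter_Icc,
          max_eq_right (hdiv_nonneg j), min_eq_left (hstep j), Icc_self] at hq
        have ht' : t = (j:ℝ)/n := hq.2
        subst ht'
        exact (hG'b s hq.1).symm
      obtain ⟨G₂, hG₂c, hG₂G, hG₂G'⟩ := glue_lift
        (isClosed_Icc.prod isClosed_Icc) (isClosed_Icc.prod isClosed_Icc)
        hGc hG'c hagree
      have hunion : (Icc (0:ℝ) 1 ×ˢ Icc (0:ℝ) ((j:ℝ)/n)) ∪
          (Icc (0:ℝ) 1 ×ˢ Icc ((j:ℝ)/n) (((j:ℝ)+1)/n)) =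
          Icc (0:ℝ) 1 ×ˢ Icc (0:ℝ) (((j+1:ℕ):ℝ)/n) := by
        have hcast : ((j+1:ℕ):ℝ) = (j:ℝ)+1 := by push_cast; ring
        rw [hcast, ← Set.prod_union, Icc_union_Icc_eq_Icc (hdiv_nonneg j) (hstep j)]
      rw [← hunion]
      refine ⟨G₂, hG₂c, ?_, ?_⟩
      · intro q hq
        rcases hq with hq | hq
        · rw [hG₂G hq]; exact hGl q hq
        · rw [hG₂G' hq]; exact hG'l q hq
      · intro s hs
        have hmem : (s, (0:ℝ)) ∈ Icc (0:ℝ) 1 ×ˢ Icc (0:ℝ) ((j:ℝ)/n) :=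
          ⟨hs, left_mem_Icc.mpr (hdiv_nonneg j)⟩
        rw [hG₂G hmem]
        exact hGb s hs
  obtain ⟨G, hGc, hGl, hGb⟩ := key n hn le_rfl
  have hnn : ((n:ℕ):ℝ)/n = 1 := div_self hn'.ne'
  rw [hnn] at hGc hGl
  exact ⟨G, hGc, hGl, hGb⟩

end DoubleCoverLifting

theorem critical_point_in_noninjective_simply_connected_domain
    (f τ : ℂ → ℂ) (c : ℂ)
    (hf : Continuous f) (hopen : IsOpenMap f)
    (hperfect : ∀ K : Set ℂ, IsCompact K → IsCompact (f ⁻¹' K))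
    (hτ : Continuous τ) (hττ : ∀ x, τ (τ x) = x) (hfτ : ∀ x, f (τ x) = f x)
    (hfib : ∀ x y, f x = f y → y = x ∨ y = τ x)
    (hc : τ c = c) (hcuniq : ∀ x, τ x = x → x = c)
    (hconf : Confluent f)
    (horiented : ∀ Z : Set ℂ, IsContinuum Z → f '' hullC Z ⊆ hullC (f '' Z))
    (U : Set ℂ) (hUopen : IsOpen U)
    (hUsc : SimplyConnectedSpace U)
    (hfUsc : SimplyConnectedSpace (f '' U))
    (hninj : ¬ Set.InjOn f U) :
    c ∈ U := by
  classical
  by_contra hcU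
  rw [Set.InjOn] at hninj
  push_neg at hninj
  obtain ⟨a, haU, b, hbU, hfab, hne⟩ := hninj
  have hvU : f c ∉ f '' U := by
    rintro ⟨u, huU, hu⟩
    rcases hfib c u hu.symm with h | h
    · exact hcU (h ▸ huU)
    · rw [hc] at h; exact hcU (h ▸ huU)
  haveI := hUsc
  haveI := hfUsc
  haveI : PathConnectedSpace U := inferInstance
  set γ : Path (⟨a, haU⟩ : U) (⟨b, hbU⟩ : U) := PathConnectedSpace.somePath _ _ with hγ
  set F : U → (f '' U : Set ℂ) := fun u => ⟨f u, Set.mem_image_of_mem f u.2⟩ with hFdef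
  have hF : Continuous F := Continuous.subtype_mk (hf.comp continuous_subtype_val) _
  set x : (f '' U : Set ℂ) := F ⟨a, haU⟩ with hxdef
  have hyx : x = F ⟨b, hbU⟩ := Subtype.ext hfab
  set q' : Path x x := (γ.map hF).cast rfl hyx with hq'def
  have hq'eval : ∀ σ : unitInterval, ((q' σ : (f '' U : Set ℂ)) : ℂ) = f ((γ σ : U) : ℂ) := by
    intro σ
    rw [hq'def]
    rw [Path.cast_coe]
    rw [Path.map_coe]
    rfl
  obtain ⟨h⟩ := SimplyConnectedSpace.paths_homotopic q' (Path.refl x)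
  set pr : ℝ → unitInterval := Set.projIcc 0 1 zero_le_one with hprdef
  have hpr0 : pr 0 = 0 := by
    rw [hprdef]
    exact Set.projIcc_left _
  have hpr1 : pr 1 = 1 := by
    rw [hprdef]
    exact Set.projIcc_right _
  set HH : ℝ × ℝ → ℂ := fun z => ((h (pr z.2, pr z.1) : (f '' U : Set ℂ)) : ℂ) with hHHdef
  have hHHc : Continuous HH := by
    apply continuous_subtype_val.comp
    exact h.continuous.comp ((continuous_projIcc.comp continuous_snd).prodMk
      (continuous_projIcc.comp continuous_fst))
  have hrange : ∀ z : ℝ × ℝ, HH z ∈ f '' U := fun z => (h (pr z.2, pr z.1)).2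
  have hHv : ∀ q ∈ Icc (0:ℝ) 1 ×ˢ Icc (0:ℝ) 1, HH q ≠ f c :=
    fun q _ hEq => hvU (hEq ▸ hrange q)
  have hsur : ∀ q ∈ Icc (0:ℝ) 1 ×ˢ Icc (0:ℝ) 1, ∃ y, f y = HH q := by
    intro q _
    obtain ⟨u, _, hfu⟩ := hrange q
    exact ⟨u, hfu⟩
  set p : ℝ → ℂ := fun s => ((γ (pr s) : U) : ℂ) with hpdef
  have hpc : Continuous p :=
    continuous_subtype_val.comp (γ.continuous.comp continuous_projIcc)
  have hbot : ∀ s ∈ Icc (0:ℝ) 1, f (p s) = HH (s, 0) := by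
    intro s _
    show f (p s) = ((h (pr 0, pr s) : (f '' U : Set ℂ)) : ℂ)
    rw [hpr0]
    have h0 : h ((0 : unitInterval), pr s) = q'.toContinuousMap (pr s) := h.apply_zero (pr s)
    rw [h0]
    have : (q'.toContinuousMap (pr s) : ℂ) = ((q' (pr s) : (f '' U : Set ℂ)) : ℂ) := rfl
    rw [this, hq'eval]
  have hleft : ∀ t : ℝ, HH (0, t) = f a := by
    intro t
    show ((h (pr t, pr 0) : (f '' U : Set ℂ)) : ℂ) = f a
    rw [hpr0]
    have := h.source (pr t)
    rw [this]
  have hright : ∀ t : ℝ, HH (1, t) = f a := by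
    intro t
    show ((h (pr t, pr 1) : (f '' U : Set ℂ)) : ℂ) = f a
    rw [hpr1]
    have := h.target (pr t)
    rw [this]
  have htop : ∀ s : ℝ, HH (s, 1) = f a := by
    intro s
    show ((h (pr 1, pr s) : (f '' U : Set ℂ)) : ℂ) = f a
    rw [hpr1]
    have h1 : h ((1 : unitInterval), pr s) = (Path.refl x).toContinuousMap (pr s) :=
      h.apply_one (pr s)
    rw [h1]
    rfl
  obtain ⟨G, hGc, hGl, hGb⟩ := square_lift hf hopen hτ hττ hfτ hfib hcuniq hHHc hHv hsur hpc hbot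
  have h01 : (0:ℝ) ∈ Icc (0:ℝ) 1 := left_mem_Icc.mpr zero_le_one
  have h11 : (1:ℝ) ∈ Icc (0:ℝ) 1 := right_mem_Icc.mpr zero_le_one
  have hG00 : G (0, 0) = a := by
    rw [hGb 0 h01, hpdef]
    show ((γ (pr 0) : U) : ℂ) = a
    rw [hpr0, γ.source]
  have hG10 : G (1, 0) = b := by
    rw [hGb 1 h11, hpdef]
    show ((γ (pr 1) : U) : ℂ) = b
    rw [hpr1, γ.target]
  -- left edge
  have hLsub : ({(0:ℝ)} : Set ℝ) ×ˢ Icc (0:ℝ) 1 ⊆ Icc (0:ℝ) 1 ×ˢ Icc (0:ℝ) 1 :=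
    Set.prod_mono (singleton_subset_iff.mpr h01) Subset.rfl
  have hG01 : G (0, 1) = a := by
    have := lift_unique (g₂ := fun _ => a) hτ hfib hcuniq
      (((convex_singleton _).prod (convex_Icc _ _)).isPreconnected)
      (hGc.mono hLsub) continuousOn_const
      (by
        rintro ⟨z1, z2⟩ ⟨hz1, hz2⟩
        have hz1' : z1 = 0 := hz1
        subst hz1'
        rw [hGl _ (hLsub ⟨hz1, hz2⟩)]
        exact hleft z2)
      (by
        intro z hz hGz
        exact hHv z (hLsub hz) (by rw [← hGl z (hLsub hz), hGz]))
      (show ((0:ℝ), (0:ℝ)) ∈ _ from ⟨rfl, h01⟩) hG00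
    exact this (show ((0:ℝ), (1:ℝ)) ∈ _ from ⟨rfl, h11⟩)
  -- top edge
  have hTsub : Icc (0:ℝ) 1 ×ˢ ({(1:ℝ)} : Set ℝ) ⊆ Icc (0:ℝ) 1 ×ˢ Icc (0:ℝ) 1 :=
    Set.prod_mono Subset.rfl (singleton_subset_iff.mpr h11)
  have hG11a : G (1, 1) = a := by
    have := lift_unique (g₂ := fun _ => a) hτ hfib hcuniq
      (((convex_Icc _ _).prod (convex_singleton _)).isPreconnected)
      (hGc.mono hTsub) continuousOn_const
      (by
        rintro ⟨z1, z2⟩ ⟨hz1, hz2⟩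
        have hz2' : z2 = 1 := hz2
        subst hz2'
        rw [hGl _ (hTsub ⟨hz1, hz2⟩)]
        exact htop z1)
      (by
        intro z hz hGz
        exact hHv z (hTsub hz) (by rw [← hGl z (hTsub hz), hGz]))
      (show ((0:ℝ), (1:ℝ)) ∈ _ from ⟨h01, rfl⟩) hG01
    exact this (show ((1:ℝ), (1:ℝ)) ∈ _ from ⟨h11, rfl⟩)
  -- right edge
  have hRsub : ({(1:ℝ)} : Set ℝ) ×ˢ Icc (0:ℝ) 1 ⊆ Icc (0:ℝ) 1 ×ˢ Icc (0:ℝ) 1 :=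
    Set.prod_mono (singleton_subset_iff.mpr h11) Subset.rfl
  have hG11b : G (1, 1) = b := by
    have := lift_unique (g₂ := fun _ => b) hτ hfib hcuniq
      (((convex_singleton _).prod (convex_Icc _ _)).isPreconnected)
      (hGc.mono hRsub) continuousOn_const
      (by
        rintro ⟨z1, z2⟩ ⟨hz1, hz2⟩
        have hz1' : z1 = 1 := hz1
        subst hz1'
        rw [hGl _ (hRsub ⟨hz1, hz2⟩)]
        rw [hright z2]
        exact hfab)
      (by
        intro z hz hGz
        exact hHv z (hRsub hz) (by rw [← hGl z (hRsub hz), hGz]))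
      (show ((1:ℝ), (0:ℝ)) ∈ _ from ⟨rfl, h01⟩) hG10
    exact this (show ((1:ℝ), (1:ℝ)) ∈ _ from ⟨rfl, h11⟩)
  exact hne (by rw [← hG11a, hG11b])
end

section
/- Let (f, τ, c) be degree −2 branched covering data with critical value v = f(c), and assume f is oriented. Let X ⊆ ℂ be an unshielded continuum with f(X) = X which is not fully invariant (f⁻¹(X) ≠ X), and suppose v ∈ T(X). Then: (i) T(X) is not fully invariant, i.e. f⁻¹(T(X)) ≠ T(X); (ii) τ(X) is not contained in T(X); and (iii) X ∩ τ(X) ≠ ∅. -/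
/-!
The fibres of `f` are the pairs `{x, τ x}`, so `f⁻¹(X) = X ∪ τ(X)`, and non-invariance gives
`x ∈ X` with `τ x ∉ X`. Orientation makes `f` map `T(X)` into itself, hence, `f` being open,
`int T(X) = T(X) \ X` into itself; so `τ x ∈ T(X)` would put `f x = f (τ x)` in `int T(X)`,
although `f x ∈ X = ∂T(X)`. This gives (ii), and (i) follows since `τ(X) ⊆ f⁻¹(X)`.

For (iii), suppose `X ∩ τ(X) = ∅`. The connected set `τ(X)` misses `∂T(X)` and leaves `T(X)`,
so it misses `T(X)`; by symmetry `T(X)` and `τ(T(X)) = T(τ(X))` are disjoint, so the fixed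
point `c` lies in neither. By Janiszewski's theorem (via continuous logarithms of `z - c`),
`c` then lies in the unbounded component of `ℂ \ (X ∪ τ(X)) = ℂ \ f⁻¹(X)`. But `f` maps that
component into the bounded component of `ℂ \ X` containing `v = f c`, which is impossible for a
perfect map.
-/

open Set Topology Bornology

/-- `X` is unshielded: it equals the boundary of the unbounded component
`U_∞(X) = (T(X))ᶜ` of its complement. -/
def Unshielded (X : Set ℂ) : Prop := X = frontier (hullC X)ᶜ

open Function Metric

def HasContinuousLogOn {α : Type*} [TopologicalSpace α] (h : α → ℂ) (K : Set α) : Prop :=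
  ∃ g : α → ℂ, ContinuousOn g K ∧ ∀ z ∈ K, Complex.exp (g z) = h z

section ContinuousLog

variable {α : Type*} [TopologicalSpace α] {K : Set α}

theorem hasContinuousLogOn_const {c : ℂ} (hc : c ≠ 0) : HasContinuousLogOn (fun _ ↦ c) K :=
  ⟨fun _ ↦ Complex.log c, continuousOn_const, fun _ _ ↦ Complex.exp_log hc⟩

theorem HasContinuousLogOn.congr {u w : α → ℂ} (hu : HasContinuousLogOn u K) (huw : EqOn u w K) :
    HasContinuousLogOn w K := by
  obtain ⟨g, hg, hexp⟩ := hu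
  exact ⟨g, hg, fun z hz ↦ (hexp z hz).trans (huw hz)⟩

theorem HasContinuousLogOn.of_dist_lt {u w : α → ℂ} (hu : HasContinuousLogOn u K)
    (hu_cont : ContinuousOn u K) (hw_cont : ContinuousOn w K)
    (hdist : ∀ z ∈ K, dist (w z) (u z) < ‖u z‖) : HasContinuousLogOn w K := by
  obtain ⟨g, hg, hexp⟩ := hu
  have hu0 : ∀ z ∈ K, u z ≠ 0 := fun z hz h ↦
    (norm_nonneg _).not_gt (by simpa [h] using hdist z hz)
  have hslit : ∀ z ∈ K, w z / u z ∈ Complex.slitPlane := fun z hz ↦ by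
    apply Complex.ball_one_subset_slitPlane
    rw [mem_ball, dist_eq_norm, div_sub_one (hu0 z hz), norm_div,
      div_lt_one (norm_pos_iff.2 (hu0 z hz)), ← dist_eq_norm]
    exact hdist z hz
  refine ⟨fun z ↦ g z + Complex.log (w z / u z),
    hg.add ((hw_cont.div hu_cont hu0).clog hslit), fun z hz ↦ ?_⟩
  rw [Complex.exp_add, hexp z hz, Complex.exp_log (Complex.slitPlane_ne_zero (hslit z hz)),
    mul_div_cancel₀ _ (hu0 z hz)]

theorem HasContinuousLogOn.union {h : α → ℂ} {A B : Set α} (hA : HasContinuousLogOn h A)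
    (hB : HasContinuousLogOn h B) (hAc : IsClosed A) (hBc : IsClosed B) (hAB : Disjoint A B) :
    HasContinuousLogOn h (A ∪ B) := by
  classical
  obtain ⟨g₁, hg₁, hexp₁⟩ := hA
  obtain ⟨g₂, hg₂, hexp₂⟩ := hB
  have hB' : EqOn (A.piecewise g₁ g₂) g₂ B := fun z hz ↦
    piecewise_eq_of_notMem _ _ _ (hAB.notMem_of_mem_right hz)
  refine ⟨A.piecewise g₁ g₂,
    (hg₁.congr (piecewise_eqOn A g₁ g₂)).union_of_isClosed (hg₂.congr hB') hAc hBc, ?_⟩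
  rintro z (hz | hz)
  · rw [piecewise_eq_of_mem _ _ _ hz, hexp₁ z hz]
  · rw [hB' hz, hexp₂ z hz]

/-- By uniform continuity, `H z s` and `H z t` are closer than the minimum modulus of `H` once
`s` and `t` are close, so `of_dist_lt` moves a logarithm between them. -/
theorem HasContinuousLogOn.of_homotopy {α : Type*} [PseudoMetricSpace α] {K : Set α}
    (hK : IsCompact K) {H : α → ℝ → ℂ} (hH : ContinuousOn (uncurry H) (K ×ˢ Icc 0 1))
    (hH0 : ∀ z ∈ K, ∀ t ∈ Icc (0 : ℝ) 1, H z t ≠ 0) (h0 : HasContinuousLogOn (H · 0) K) :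
    HasContinuousLogOn (H · 1) K := by
  have hKI : IsCompact (K ×ˢ Icc (0 : ℝ) 1) := hK.prod isCompact_Icc
  obtain ⟨m, hm, hmle⟩ := hKI.exists_forall_le' hH.norm
    fun p hp ↦ norm_pos_iff.2 (hH0 _ hp.1 _ hp.2)
  obtain ⟨δ, hδ, hclose⟩ :=
    Metric.uniformContinuousOn_iff.1 (hKI.uniformContinuousOn_of_continuous hH) m hm
  have hslice : ∀ t ∈ Icc (0 : ℝ) 1, ContinuousOn (H · t) K := fun t ht ↦
    hH.comp (continuous_id.prodMk continuous_const).continuousOn fun z hz ↦ ⟨hz, ht⟩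
  have hstep : ∀ s ∈ Icc (0 : ℝ) 1, ∀ t ∈ Icc (0 : ℝ) 1, dist t s < δ →
      HasContinuousLogOn (H · s) K → HasContinuousLogOn (H · t) K := by
    intro s hs t ht hts hlog
    refine hlog.of_dist_lt (hslice s hs) (hslice t ht) fun z hz ↦ ?_
    calc dist (H z t) (H z s) < m :=
          hclose (z, t) ⟨hz, ht⟩ (z, s) ⟨hz, hs⟩ (by simpa [Prod.dist_eq] using hts)
      _ ≤ ‖H z s‖ := hmle (z, s) ⟨hz, hs⟩
  refine isPreconnected_Icc.induction₂'
    (fun s t ↦ HasContinuousLogOn (H · s) K → HasContinuousLogOn (H · t) K)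
    (fun s hs ↦ ?_) (fun _ _ _ _ _ _ h₁ h₂ ↦ h₂ ∘ h₁)
    (left_mem_Icc.2 zero_le_one) (right_mem_Icc.2 zero_le_one) h0
  filter_upwards [self_mem_nhdsWithin, nhdsWithin_le_nhds (ball_mem_nhds s hδ)] with t ht hts
  exact ⟨hstep s hs t ht hts, hstep t ht s hs (by rwa [dist_comm])⟩

end ContinuousLog

theorem hasContinuousLogOn_of_continuous {E : Type*} [NormedAddCommGroup E] [NormedSpace ℝ E]
    {G : E → ℂ} (hG : Continuous G) (hG0 : ∀ z, G z ≠ 0) {K : Set E} (hK : IsCompact K) :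
    HasContinuousLogOn G K := by
  have := HasContinuousLogOn.of_homotopy hK (H := fun z t ↦ G (t • z))
    (Continuous.continuousOn (by fun_prop)) (fun _ _ _ _ ↦ hG0 _)
    (by simpa using hasContinuousLogOn_const (K := K) (hG0 0))
  simpa using this

theorem hasContinuousLogOn_sub_of_norm_lt {K : Set ℂ} {p : ℂ} (hK : ∀ z ∈ K, ‖z‖ < ‖p‖) :
    HasContinuousLogOn (· - p) K := by
  rcases K.eq_empty_or_nonempty with rfl | ⟨z, hz⟩
  · exact ⟨0, continuousOn_empty _, fun _ h ↦ h.elim⟩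
  have hp : -p ≠ 0 := neg_ne_zero.2 (norm_pos_iff.1 ((norm_nonneg z).trans_lt (hK z hz)))
  refine (hasContinuousLogOn_const hp).of_dist_lt continuousOn_const
    (continuousOn_id.sub continuousOn_const) fun z hz ↦ ?_
  simpa [dist_eq_norm] using hK z hz

/-- Along `θ ↦ p + R e^{iθ}`, `θ ↦ g(p + R e^{iθ}) - iθ` lifts a constant through `exp`, so it
is constant on `[0, 2π]`; but it drops by `2πi` between the endpoints. -/
theorem not_hasContinuousLogOn_sub_sphere (p : ℂ) {R : ℝ} (hR : 0 < R) :
    ¬ HasContinuousLogOn (· - p) (sphere p R) := by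
  rintro ⟨g, hg, hexp⟩
  set q : ℝ → ℂ := fun θ ↦ p + R * Complex.exp (θ * Complex.I)
  have hq : ∀ θ, q θ ∈ sphere p R := fun θ ↦ by
    simp [q, Complex.norm_exp_ofReal_mul_I, abs_of_pos hR]
  have hconst := Complex.isCoveringMap_exp.constOn_of_comp (isPreconnected_Icc (a := 0)
      (b := 2 * Real.pi)) (g := fun θ : ℝ ↦ g (q θ) - θ * Complex.I)
    ((hg.comp_continuous (by fun_prop) hq).sub (by fun_prop)).continuousOn
    (fun θ _ θ' _ ↦ Subtype.ext <| by
      simp only [Complex.exp_sub, hexp _ (hq _), q, add_sub_cancel_left]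
      rw [mul_div_cancel_right₀ _ (Complex.exp_ne_zero _),
        mul_div_cancel_right₀ _ (Complex.exp_ne_zero _)])
    (left_mem_Icc.2 Real.two_pi_pos.le) (right_mem_Icc.2 Real.two_pi_pos.le)
  have hq2π : q (2 * Real.pi) = q 0 := by simp [q, Complex.exp_two_pi_mul_I]
  simp only [hq2π, Complex.ofReal_zero, zero_mul, sub_zero] at hconst
  simpa [Real.pi_ne_zero, Complex.I_ne_zero] using sub_eq_self.1 hconst.symm

theorem frontier_connectedComponentIn_subset {α : Type*} [TopologicalSpace α]
    [LocallyConnectedSpace α] {U : Set α} (hU : IsOpen U) (x : α) :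
    frontier (connectedComponentIn U x) ⊆ Uᶜ := by
  intro z hz hzU
  obtain ⟨y, hyz, hyx⟩ := mem_closure_iff_nhds.1 hz.1 _
    (connectedComponentIn_mem_nhds (hU.mem_nhds hzU))
  have hxz : connectedComponentIn U x = connectedComponentIn U z :=
    (connectedComponentIn_eq hyx).trans (connectedComponentIn_eq hyz).symm
  apply hz.2
  rw [hU.connectedComponentIn.interior_eq, hxz]
  exact mem_connectedComponentIn hzU

theorem IsPreconnected.disjoint_of_disjoint_frontier {α : Type*} [TopologicalSpace α]
    {S T : Set α} (hS : IsPreconnected S) (hT : IsClosed T) (hST : Disjoint S (frontier T))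
    (hS_not : ¬ S ⊆ T) : Disjoint S T := by
  have hcover : S ⊆ interior T ∪ Tᶜ := fun z hz ↦ by
    by_cases hzT : z ∈ T
    · exact Or.inl (self_sdiff_frontier T ▸ ⟨hzT, hST.notMem_of_mem_left hz⟩)
    · exact Or.inr hzT
  rcases hS.subset_or_subset isOpen_interior hT.isOpen_compl
    (disjoint_compl_right.mono_left interior_subset) hcover with h | h
  · exact (hS_not (h.trans interior_subset)).elim
  · exact subset_compl_iff_disjoint_right.1 h

theorem Bornology.IsBounded.image_of_continuous {α β : Type*} [PseudoMetricSpace α] [ProperSpace α]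
    [PseudoMetricSpace β] {f : α → β} (hf : Continuous f) {s : Set α} (hs : IsBounded s) :
    IsBounded (f '' s) :=
  (hs.isCompact_closure.image hf).isBounded.subset (image_mono subset_closure)

theorem subset_hullC (Y : Set ℂ) : Y ⊆ hullC Y := fun y hy ↦ by
  simp [hullC, connectedComponentIn_eq_empty (notMem_compl_iff.2 hy)]

theorem eventually_mem_hullC_iff {Y : Set ℂ} (hY : IsClosed Y) {z : ℂ} (hz : z ∉ Y) :
    ∀ᶠ w in 𝓝 z, (w ∈ hullC Y ↔ z ∈ hullC Y) := by
  filter_upwards [connectedComponentIn_mem_nhds (hY.isOpen_compl.mem_nhds hz)] with w hw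
  simp only [hullC, mem_ofPred_eq, connectedComponentIn_eq hw]

theorem isClosed_hullC {Y : Set ℂ} (hY : IsClosed Y) : IsClosed (hullC Y) := by
  refine isOpen_compl_iff.1 (isOpen_iff_eventually.2 fun z hz ↦ ?_)
  filter_upwards [eventually_mem_hullC_iff hY fun h ↦ hz (subset_hullC Y h)] with w hw
  exact hw.not.2 hz

theorem frontier_hullC_subset {Y : Set ℂ} (hY : IsClosed Y) : frontier (hullC Y) ⊆ Y := by
  intro z hz
  by_contra hzY
  have h := eventually_mem_hullC_iff hY hzY
  by_cases hzT : z ∈ hullC Y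
  · exact hz.2 (mem_interior_iff_mem_nhds.2 (h.mono fun w hw ↦ hw.2 hzT))
  · have : z ∈ interior (hullC Y)ᶜ := mem_interior_iff_mem_nhds.2 (h.mono fun w hw ↦ hw.not.2 hzT)
    exact (interior_compl (s := hullC Y) ▸ this) hz.1

theorem hullC_image (e : ℂ ≃ₜ ℂ) (Y : Set ℂ) : hullC (e '' Y) = e '' hullC Y := by
  ext z
  obtain ⟨w, rfl⟩ := e.surjective z
  rw [e.injective.mem_set_image]
  by_cases hw : w ∈ Y
  · exact iff_of_true (subset_hullC _ (mem_image_of_mem e hw)) (subset_hullC Y hw)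
  · have himg := e.image_connectedComponentIn (s := Yᶜ) hw
    rw [e.image_compl] at himg
    simp only [hullC, mem_ofPred_eq, ← himg]
    exact ⟨fun h ↦ by simpa [image_image] using h.image_of_continuous e.symm.continuous,
      fun h ↦ h.image_of_continuous e.continuous⟩

theorem mem_hullC_preimage {f : ℂ → ℂ} (hf : Continuous f)
    (hperfect : ∀ K : Set ℂ, IsCompact K → IsCompact (f ⁻¹' K)) {Y : Set ℂ} {z : ℂ}
    (hz : f z ∈ hullC Y) : z ∈ hullC (f ⁻¹' Y) := by
  by_cases hzY : z ∈ f ⁻¹' Y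
  · exact subset_hullC _ hzY
  have himg : f '' connectedComponentIn (f ⁻¹' Y)ᶜ z ⊆ connectedComponentIn Yᶜ (f z) :=
    (hf.continuousOn.image_connectedComponentIn_subset hzY).trans
      (connectedComponentIn_mono _ (image_preimage_subset f Yᶜ))
  exact (hperfect _ (IsBounded.isCompact_closure hz)).isBounded.subset
    ((image_subset_iff.1 himg).trans (preimage_mono subset_closure))

theorem hasContinuousLogOn_sub_of_notMem_hullC {Y : Set ℂ} (hY : IsCompact Y) {p : ℂ}
    (hp : p ∉ hullC Y) : HasContinuousLogOn (· - p) Y := by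
  have hpY : p ∈ Yᶜ := fun h ↦ hp (subset_hullC Y h)
  obtain ⟨R, hR⟩ := hY.isBounded.exists_norm_le
  obtain ⟨w, hwD, hRw⟩ : ∃ w ∈ connectedComponentIn Yᶜ p, R < ‖w‖ := by
    by_contra! h
    exact hp (isBounded_iff_forall_norm_le.2 ⟨R, h⟩)
  have hD : IsPathConnected (connectedComponentIn Yᶜ p) :=
    hY.isClosed.isOpen_compl.connectedComponentIn.isConnected_iff_isPathConnected.1
      (isConnected_connectedComponentIn_iff.2 hpY)
  obtain ⟨γ, hγ⟩ := hD.joinedIn w hwD p (mem_connectedComponentIn hpY)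
  have hγY : ∀ t, γ.extend t ∉ Y := fun t ↦ by
    obtain ⟨s, hs⟩ := γ.extend_range ▸ mem_range_self t
    exact hs ▸ connectedComponentIn_subset _ _ (hγ s)
  have := HasContinuousLogOn.of_homotopy hY (H := fun z t ↦ z - γ.extend t)
    (Continuous.continuousOn (by fun_prop))
    (fun z hz t _ ↦ sub_ne_zero.2 fun h ↦ hγY t (h ▸ hz))
    (by simpa using hasContinuousLogOn_sub_of_norm_lt fun z hz ↦ (hR z hz).trans_lt hRw)
  simpa using this

/-- Tietze extends the logarithm from the frontier of the component `C` of `p` to all of `ℂ`;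
if `C` were bounded, gluing `exp` of that extension on `C` with `z - p` outside `C` would give a
nonvanishing continuous map of `ℂ` equal to `z - p` on a large circle. -/
theorem notMem_hullC_of_hasContinuousLogOn {K : Set ℂ} (hK : IsClosed K) {p : ℂ} (hp : p ∉ K)
    (hlog : HasContinuousLogOn (· - p) K) : p ∉ hullC K := by
  classical
  intro hC
  obtain ⟨g, hg, hexp⟩ := hlog
  set C := connectedComponentIn Kᶜ p
  have hpC : p ∈ C := mem_connectedComponentIn hp
  have hfr : frontier C ⊆ K := by
    simpa using frontier_connectedComponentIn_subset hK.isOpen_compl p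
  obtain ⟨Φ, hΦ⟩ := ContinuousMap.exists_restrict_eq isClosed_frontier
    ⟨(frontier C).domRestrict g, (hg.mono hfr).domRestrict⟩
  have hΦg : ∀ z ∈ frontier C, Φ z = g z := fun z hz ↦ DFunLike.congr_fun hΦ ⟨z, hz⟩
  set G := C.piecewise (fun z ↦ Complex.exp (Φ z)) (· - p)
  have hG : Continuous G := Continuous.piecewise
    (fun z hz ↦ by simp only [hΦg z hz, hexp z (hfr hz)]) (by fun_prop) (by fun_prop)
  have hG0 : ∀ z, G z ≠ 0 := fun z ↦ by
    by_cases hz : z ∈ C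
    · simp [G, piecewise_eq_of_mem _ _ _ hz, Complex.exp_ne_zero]
    · simpa [G, piecewise_eq_of_notMem _ _ _ hz, sub_eq_zero] using fun h : z = p ↦ hz (h ▸ hpC)
  obtain ⟨R, hCR⟩ := (show IsBounded C from hC).subset_ball p
  have hR : 0 < R := by simpa using hCR hpC
  refine not_hasContinuousLogOn_sub_sphere p hR
    ((hasContinuousLogOn_of_continuous hG hG0 (isCompact_sphere p R)).congr fun z hz ↦ ?_)
  have hzC : z ∉ C := fun h ↦ (mem_ball.1 (hCR h)).ne (mem_sphere.1 hz)
  simp [G, piecewise_eq_of_notMem _ _ _ hzC]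

/-- Janiszewski's theorem. -/
theorem notMem_hullC_union {A B : Set ℂ} (hA : IsCompact A) (hB : IsCompact B)
    (hAB : Disjoint A B) {p : ℂ} (hpA : p ∉ hullC A) (hpB : p ∉ hullC B) :
    p ∉ hullC (A ∪ B) :=
  notMem_hullC_of_hasContinuousLogOn (hA.isClosed.union hB.isClosed)
    (fun h ↦ h.elim (fun h ↦ hpA (subset_hullC A h)) fun h ↦ hpB (subset_hullC B h))
    ((hasContinuousLogOn_sub_of_notMem_hullC hA hpA).union
      (hasContinuousLogOn_sub_of_notMem_hullC hB hpB) hA.isClosed hB.isClosed hAB)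

theorem isBounded_hullC {Y : Set ℂ} (hY : IsCompact Y) : IsBounded (hullC Y) := by
  obtain ⟨R, hR⟩ := hY.isBounded.exists_norm_le
  refine isBounded_iff_forall_norm_le.2 ⟨R, fun z hz ↦ not_lt.1 fun hRz ↦ ?_⟩
  exact notMem_hullC_of_hasContinuousLogOn hY.isClosed (fun h ↦ (hR z h).not_gt hRz)
    (hasContinuousLogOn_sub_of_norm_lt fun y hy ↦ (hR y hy).trans_lt hRz) hz

theorem disjoint_hullC {A B : Set ℂ} (hA : IsCompact A) (hB : IsClosed B)
    (hAB : Disjoint A (hullC B)) (hBA : Disjoint B (hullC A)) :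
    Disjoint (hullC A) (hullC B) := by
  have hTA := isClosed_hullC hA.isClosed
  have hTB := isClosed_hullC hB
  have hfr : frontier (hullC A ∩ hullC B) = ∅ := by
    refine subset_empty_iff.1 ((frontier_inter_subset _ _).trans ?_)
    rw [hTA.closure_eq, hTB.closure_eq]
    rintro z (⟨hzA, hzB⟩ | ⟨hzA, hzB⟩)
    · exact hAB.notMem_of_mem_left (frontier_hullC_subset hA.isClosed hzA) hzB
    · exact hBA.notMem_of_mem_left (frontier_hullC_subset hB hzB) hzA
  rcases frontier_eq_empty_iff.1 hfr with h | h
  · exact disjoint_iff_inter_eq_empty.2 h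
  · exact (NormedSpace.unbounded_univ ℝ ℂ ((isBounded_hullC hA).subset
      (h ▸ inter_subset_left))).elim

theorem Unshielded.frontier_hullC {X : Set ℂ} (hX : Unshielded X) : frontier (hullC X) = X :=
  (frontier_compl _).symm.trans hX.symm

theorem Unshielded.hullC_diff_self {X : Set ℂ} (hX : Unshielded X) :
    hullC X \ X = interior (hullC X) := by
  simpa only [hX.frontier_hullC] using self_sdiff_frontier (hullC X)

theorem inter_image_nonempty_of_mem_hullC_union {τ : ℂ → ℂ} (hτ : Continuous τ)
    (hττ : Involutive τ) {c : ℂ} (hc : τ c = c) {X : Set ℂ} (hX : IsContinuum X)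
    (hXu : Unshielded X) (hτT : ¬ τ '' X ⊆ hullC X) (hcX : c ∈ hullC (X ∪ τ '' X)) :
    (X ∩ τ '' X).Nonempty := by
  by_contra hne
  have hdisj : Disjoint X (τ '' X) :=
    disjoint_iff_inter_eq_empty.2 (not_nonempty_iff_eq_empty.1 hne)
  let e : ℂ ≃ₜ ℂ := ⟨hττ.toPerm τ, hτ, hτ⟩
  have he : ∀ S, hullC (τ '' S) = τ '' hullC S := hullC_image e
  have hτX : IsCompact (τ '' X) := hX.1.image hτ
  have h₁ : Disjoint (τ '' X) (hullC X) :=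
    (hX.2.isPreconnected.image τ hτ.continuousOn).disjoint_of_disjoint_frontier
      (isClosed_hullC hX.1.isClosed) (by rw [hXu.frontier_hullC]; exact hdisj.symm) hτT
  have h₂ : Disjoint X (hullC (τ '' X)) := by
    simpa [he, image_image, hττ _] using (disjoint_image_iff hττ.injective).2 h₁
  have hT := disjoint_hullC hX.1 hτX.isClosed h₂ h₁
  have hc_iff : c ∈ hullC (τ '' X) ↔ c ∈ hullC X := by
    rw [he, hττ.image_eq_preimage_symm, mem_preimage, hc]
  have hcT : c ∉ hullC X := fun h ↦ hT.notMem_of_mem_left h (hc_iff.2 h)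
  exact notMem_hullC_union hX.1 hτX hdisj hcT (mt hc_iff.1 hcT) hcX

theorem preimage_image_eq_union_image {α β : Type*} {f : α → β} {τ : α → α}
    (hfτ : ∀ x, f (τ x) = f x) (hfib : ∀ x y, f x = f y → y = x ∨ y = τ x) (X : Set α) :
    f ⁻¹' (f '' X) = X ∪ τ '' X := by
  ext z
  constructor
  · rintro ⟨x, hx, hxz⟩
    rcases hfib x z hxz with rfl | rfl
    exacts [Or.inl hx, Or.inr ⟨x, hx, rfl⟩]
  · rintro (hz | ⟨x, hx, rfl⟩)
    exacts [⟨z, hz, rfl⟩, ⟨x, hx, (hfτ x).symm⟩]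

theorem image_not_subset_hullC {f τ : ℂ → ℂ} (hopen : IsOpenMap f) (hfτ : ∀ x, f (τ x) = f x)
    {X : Set ℂ} (hXu : Unshielded X) (hfX : f '' X ⊆ X) (hfT : f '' hullC X ⊆ hullC X)
    (hτX : ¬ τ '' X ⊆ X) : ¬ τ '' X ⊆ hullC X := by
  intro hτT
  obtain ⟨_, ⟨x, hx, rfl⟩, hτx⟩ := not_subset.1 hτX
  have hint : f '' interior (hullC X) ⊆ interior (hullC X) :=
    interior_maximal ((image_mono interior_subset).trans hfT) (hopen _ isOpen_interior)
  have hfx : f x ∈ interior (hullC X) := by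
    rw [← hfτ]
    exact hint ⟨τ x, hXu.hullC_diff_self ▸ ⟨hτT ⟨x, hx, rfl⟩, hτx⟩, rfl⟩
  exact (hXu.hullC_diff_self ▸ hfx).2 (hfX ⟨x, hx, rfl⟩)

theorem not_fully_invariant_consequences_general
    (f τ : ℂ → ℂ) (c : ℂ)
    (hf : Continuous f) (hopen : IsOpenMap f)
    (hperfect : ∀ K : Set ℂ, IsCompact K → IsCompact (f ⁻¹' K))
    (hτ : Continuous τ) (hττ : ∀ x, τ (τ x) = x) (hfτ : ∀ x, f (τ x) = f x)
    (hfib : ∀ x y, f x = f y → y = x ∨ y = τ x)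
    (hc : τ c = c)
    (horiented : ∀ Z : Set ℂ, IsContinuum Z → f '' hullC Z ⊆ hullC (f '' Z))
    (X : Set ℂ) (hX : IsContinuum X) (hXu : Unshielded X)
    (hfX : f '' X = X) (hnfi : f ⁻¹' X ≠ X)
    (hv : f c ∈ hullC X) :
    f ⁻¹' hullC X ≠ hullC X ∧
    ¬ τ '' X ⊆ hullC X ∧
    (X ∩ τ '' X).Nonempty := by
  have hpre : f ⁻¹' X = X ∪ τ '' X := by
    rw [← preimage_image_eq_union_image hfτ hfib X, hfX]
  have hτX : ¬ τ '' X ⊆ X := fun h ↦ hnfi (by rw [hpre, union_eq_left.2 h])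
  have hfT : f '' hullC X ⊆ hullC X := by simpa only [hfX] using horiented X hX
  have hτT := image_not_subset_hullC hopen hfτ hXu hfX.subset hfT hτX
  refine ⟨fun h ↦ hτT ?_, hτT, ?_⟩
  · calc τ '' X ⊆ f ⁻¹' X := hpre ▸ subset_union_right
      _ ⊆ f ⁻¹' hullC X := preimage_mono (subset_hullC X)
      _ = hullC X := h
  · exact inter_image_nonempty_of_mem_hullC_union hτ hττ hc hX hXu hτT
      (hpre ▸ mem_hullC_preimage hf hperfect hv)

theorem not_fully_invariant_consequences
    (f τ : ℂ → ℂ) (c : ℂ)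
    (hf : Continuous f) (hopen : IsOpenMap f)
    (hperfect : ∀ K : Set ℂ, IsCompact K → IsCompact (f ⁻¹' K))
    (hτ : Continuous τ) (hττ : ∀ x, τ (τ x) = x) (hfτ : ∀ x, f (τ x) = f x)
    (hfib : ∀ x y, f x = f y → y = x ∨ y = τ x)
    (hc : τ c = c) (hcuniq : ∀ x, τ x = x → x = c)
    (horiented : ∀ Z : Set ℂ, IsContinuum Z → f '' hullC Z ⊆ hullC (f '' Z))
    (X : Set ℂ) (hX : IsContinuum X) (hXu : Unshielded X)
    (hfX : f '' X = X) (hnfi : f ⁻¹' X ≠ X)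
    (hv : f c ∈ hullC X) :
    f ⁻¹' hullC X ≠ hullC X ∧
    ¬ τ '' X ⊆ hullC X ∧
    (X ∩ τ '' X).Nonempty :=
  not_fully_invariant_consequences_general f τ c hf hopen hperfect hτ hττ hfτ hfib hc horiented X hX
    hXu hfX hnfi hv
end

section
/- Let (f, τ, c) be degree −2 branched covering data and let X ⊆ ℂ be a continuum with f(X) = X. If A ⊆ X is a dense G_δ subset of the space X (with its subspace topology), then f(A) is not a first category (meagre) subset of X. -/
open Set Topology

/-!
Since the fibres of `f` are the pairs `{x, τ x}`, we have `f ⁻¹' X ⊆ X ∪ τ ⁻¹' X`, so there is an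
open set `O` meeting `X` with `O ∩ f ⁻¹' X ⊆ X`. On the piece `O ∩ f ⁻¹' X`, which is open in
`f ⁻¹' X`, the map `f` is continuous and open into `X`; pulling back the meagre set `f '' A` shows
that `A ∩ O` is meagre in `X`. But `A` is a dense `Gδ` in the Baire space `X` and `O ∩ X` is a
nonempty open subset of `X`, a contradiction.
-/

lemma not_isMeagre_inter_of_isGδ_of_dense {α : Type*} [TopologicalSpace α] [BaireSpace α]
    {s u : Set α} (hs : IsGδ s) (hd : Dense s) (hu : IsOpen u) (hne : u.Nonempty) :
    ¬ IsMeagre (s ∩ u) := by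
  intro h
  have hsc : IsMeagre sᶜ := by simpa [IsMeagre] using residual_of_dense_Gδ hs hd
  refine not_isMeagre_of_isOpen hu hne ((h.union hsc).mono fun x hx => ?_)
  by_cases hxs : x ∈ s
  exacts [Or.inl ⟨hxs, hx⟩, Or.inr hxs]

lemma IsOpenMap.restrict_inter_preimage {α β : Type*} [TopologicalSpace α]
    [TopologicalSpace β] {f : α → β} (hf : IsOpenMap f) {O : Set α} (hO : IsOpen O)
    (t : Set β) :
    IsOpenMap (((mapsTo_preimage f t).mono_left inter_subset_right).restrict f (O ∩ f ⁻¹' t) t) := by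
  intro U hU
  obtain ⟨V, hV, rfl⟩ := isOpen_induced_iff.mp hU
  refine isOpen_induced_iff.mpr ⟨f '' (V ∩ O), hf _ (hV.inter hO), ?_⟩
  ext y
  constructor
  · rintro ⟨x, ⟨hxV, hxO⟩, hxy⟩
    have hxt : f x ∈ t := hxy ▸ y.2
    exact ⟨⟨x, hxO, hxt⟩, hxV, Subtype.ext hxy⟩
  · rintro ⟨x, hxV, rfl⟩
    exact ⟨x, ⟨hxV, x.2.1⟩, rfl⟩

section TwoToOne

variable {α : Type*} {f : α → α} {τ : α → α} (hττ : ∀ x, τ (τ x) = x) (hfib : ∀ x y, f x = f y → y = x ∨ y = τ x)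
include hττ hfib

lemma preimage_image_subset_union_preimage_of_fibers (s : Set α) :
    f ⁻¹' (f '' s) ⊆ s ∪ τ ⁻¹' s := by
  rintro y ⟨x, hxs, hxy⟩
  rcases hfib x y hxy with rfl | rfl
  exacts [Or.inl hxs, Or.inr (by rw [mem_preimage, hττ]; exact hxs)]

-- Take `O = (τ ⁻¹' X)ᶜ`, or `O = univ` when `X` is `τ`-invariant.
lemma exists_isOpen_inter_preimage_subset [TopologicalSpace α] (hτ : Continuous τ) {X : Set α}
    (hXc : IsClosed X) (hXne : X.Nonempty) (hfX : X ⊆ f '' X) :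
    ∃ O : Set α, IsOpen O ∧ (O ∩ X).Nonempty ∧ O ∩ f ⁻¹' X ⊆ X := by
  have hcover : f ⁻¹' X ⊆ X ∪ τ ⁻¹' X := by
    exact (preimage_mono hfX).trans (preimage_image_subset_union_preimage_of_fibers hττ hfib X)
  by_cases hinv : X ⊆ τ ⁻¹' X
  · refine ⟨univ, isOpen_univ, by simpa using hXne, fun y ⟨_, hy⟩ => ?_⟩
    rcases hcover hy with hyX | hτyX
    exacts [hyX, hττ y ▸ hinv hτyX]
  · obtain ⟨x, hxX, hτx⟩ := not_subset.mp hinv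
    refine ⟨(τ ⁻¹' X)ᶜ, (hXc.preimage hτ).isOpen_compl, ⟨x, hτx, hxX⟩, fun y ⟨hyO, hy⟩ => ?_⟩
    exact (hcover hy).resolve_right hyO

end TwoToOne

theorem image_of_dense_Gdelta_not_meagre_general
    (f τ : ℂ → ℂ)
    (hf : Continuous f) (hopen : IsOpenMap f)
    (hτ : Continuous τ) (hττ : ∀ x, τ (τ x) = x)
    (hfib : ∀ x y, f x = f y → y = x ∨ y = τ x)
    (X : Set ℂ) (hX : IsContinuum X) (hfX : f '' X = X)
    (A : Set ℂ)
    (hGdelta : IsGδ (Subtype.val ⁻¹' A : Set X))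
    (hdense : Dense (Subtype.val ⁻¹' A : Set X)) :
    ¬ IsMeagre (Subtype.val ⁻¹' (f '' A) : Set X) := by
  intro hmeagre
  have : CompactSpace X := isCompact_iff_compactSpace.mp hX.1
  obtain ⟨O, hO, ⟨x, hxO, hxX⟩, hOX⟩ :=
    exists_isOpen_inter_preimage_subset hττ hfib hτ hX.1.isClosed hX.2.nonempty hfX.superset
  have hmaps : MapsTo f (O ∩ f ⁻¹' X) X := (mapsTo_preimage f X).mono_left inter_subset_right
  have hAW : IsMeagre (Subtype.val ⁻¹' A : Set ↥(O ∩ f ⁻¹' X)) :=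
    (hmeagre.preimage_of_isOpenMap (hf.restrict hmaps)
      (hopen.restrict_inter_preimage hO X)).mono fun _ hw => mem_image_of_mem f hw
  have hAO : IsMeagre (Subtype.val ⁻¹' A ∩ Subtype.val ⁻¹' O : Set X) := by
    refine ((IsEmbedding.inclusion hOX).isInducing.isMeagre_image hAW).mono ?_
    rintro y ⟨hyA, hyO⟩
    exact ⟨⟨y, hyO, (mapsTo_image f X).mono_right hfX.subset y.2⟩, hyA, rfl⟩
  exact not_isMeagre_inter_of_isGδ_of_dense hGdelta hdense
    (hO.preimage continuous_subtype_val) ⟨⟨x, hxX⟩, hxO⟩ hAO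

theorem image_of_dense_Gdelta_not_meagre
    (f τ : ℂ → ℂ) (c : ℂ)
    (hf : Continuous f) (hopen : IsOpenMap f)
    (hperfect : ∀ K : Set ℂ, IsCompact K → IsCompact (f ⁻¹' K))
    (hτ : Continuous τ) (hττ : ∀ x, τ (τ x) = x) (hfτ : ∀ x, f (τ x) = f x)
    (hfib : ∀ x y, f x = f y → y = x ∨ y = τ x)
    (hc : τ c = c) (hcuniq : ∀ x, τ x = x → x = c)
    (X : Set ℂ) (hX : IsContinuum X) (hfX : f '' X = X)
    (A : Set ℂ) (hA : A ⊆ X)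
    (hGdelta : IsGδ (Subtype.val ⁻¹' A : Set X))
    (hdense : Dense (Subtype.val ⁻¹' A : Set X)) :
    ¬ IsMeagre (Subtype.val ⁻¹' (f '' A) : Set X) :=
  image_of_dense_Gdelta_not_meagre_general f τ hf hopen hτ hττ hfib X hX hfX A hGdelta hdense
end

section
/- Let (f, τ, c) be degree −2 branched covering data and let X ⊆ ℂ be an indecomposable continuum with f(X) = X. Suppose D ⊆ X is a union of composants of X (i.e. for every x ∈ D the composant of x in X is contained in D) and D is a first category (meagre) subset of X. Then there exists a composant T of X such that f(T) ∩ D = ∅. -/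
open Set Topology

/-- An indecomposable continuum: non-degenerate and not the union of two
proper subcontinua. -/
def IndecomposableC (X : Set ℂ) : Prop :=
  IsContinuum X ∧ X.Nontrivial ∧
    ¬ ∃ A B : Set ℂ, IsContinuum A ∧ IsContinuum B ∧ A ⊆ X ∧ B ⊆ X ∧
      A ≠ X ∧ B ≠ X ∧ A ∪ B = X

/-- The composant of a point `x` in `X`: the union of all proper subcontinua
of `X` containing `x`. -/
def Composant (X : Set ℂ) (x : ℂ) : Set ℂ :=
  ⋃₀ {P : Set ℂ | IsContinuum P ∧ P ⊆ X ∧ P ≠ X ∧ x ∈ P}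

/-- `Z` is a composant of `X`. -/
def IsComposant (X Z : Set ℂ) : Prop := ∃ x ∈ X, Z = Composant X x

/-!
Proper subcontinua of an indecomposable continuum `X` are nowhere dense. Hence a proper
subcontinuum `P` cannot satisfy `f '' P = X`: every fibre of `f` is `{x, τ x}`, so this would
give `X ⊆ P ∪ τ '' P`, and density of `X \ P` would force `X ⊆ τ '' P`, i.e. `X ⊆ P`.
So `f` maps proper subcontinua to proper subcontinua, and `z ∈ Composant X x` implies
`f x ∈ Composant X (f z)`. By Baire, the meagre set `D` misses some `y = f x ∈ X`; if `f z ∈ D`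
for some `z` in the composant of `x`, then `y` lies in the composant of `f z`, hence in `D`.
-/

theorem IsPreconnected.of_union_of_isPreconnected_inter {α : Type*} [TopologicalSpace α]
    {A B : Set α} (hAB : IsPreconnected (A ∪ B)) (hA : IsClosed A) (hB : IsClosed B)
    (hinter : IsPreconnected (A ∩ B)) : IsPreconnected A := by
  rw [isPreconnected_closed_iff] at hAB ⊢
  intro t t' ht ht' hcover hAt hAt'
  by_contra hdisj
  wlog hBt : ¬ (A ∩ B ∩ t).Nonempty generalizing t t'
  · refine this t' t ht' ht (hcover.trans (union_comm t t').le) hAt' hAt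
      (by rwa [inter_comm t']) fun hBt' => hdisj ?_
    obtain ⟨z, hzAB, hz⟩ := isPreconnected_closed_iff.mp hinter t t' ht ht'
      (inter_subset_left.trans hcover) (by simpa [inter_assoc] using hBt)
      (by simpa [inter_assoc] using hBt')
    exact ⟨z, hzAB.1, hz⟩
  -- Once `A ∩ B` misses `t`, the closed sets `A ∩ t` and `B ∪ A ∩ t'` separate `A ∪ B`.
  have hcoverAB : A ∪ B ⊆ A ∩ t ∪ (B ∪ A ∩ t') := by
    rintro x (hxA | hxB)
    · rcases hcover hxA with hxt | hxt'
      exacts [Or.inl ⟨hxA, hxt⟩, Or.inr (Or.inr ⟨hxA, hxt'⟩)]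
    · exact Or.inr (Or.inl hxB)
  obtain ⟨a, haA, hat⟩ := hAt
  obtain ⟨a', haA', hat'⟩ := hAt'
  obtain ⟨z, -, hz, hzB | hzt'⟩ := hAB (A ∩ t) (B ∪ A ∩ t') (hA.inter ht)
    (hB.union (hA.inter ht')) hcoverAB ⟨a, Or.inl haA, haA, hat⟩
    ⟨a', Or.inl haA', Or.inr ⟨haA', hat'⟩⟩
  exacts [hBt ⟨z, ⟨hz.1, hzB⟩, hz.2⟩, hdisj ⟨z, hz.1, hz.2, hzt'.2⟩]

theorem IsContinuum.of_union_of_inter {A B : Set ℂ} (hAB : IsContinuum (A ∪ B))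
    (hA : IsClosed A) (hB : IsClosed B) (hinter : IsContinuum (A ∩ B)) : IsContinuum A :=
  ⟨hAB.1.of_isClosed_subset hA subset_union_left, hinter.2.nonempty.mono inter_subset_left,
    hAB.2.isPreconnected.of_union_of_isPreconnected_inter hA hB hinter.2.isPreconnected⟩

theorem IsCompact.nonempty_diff_of_isMeagre {α : Type*} [TopologicalSpace α] [T2Space α]
    {X D : Set α} (hX : IsCompact X) (hne : X.Nonempty)
    (hD : IsMeagre (Subtype.val ⁻¹' D : Set X)) : (X \ D).Nonempty := by
  by_contra h
  have hXD : X ⊆ D := sdiff_eq_empty.mp (not_nonempty_iff_eq_empty.mp h)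
  have : CompactSpace X := isCompact_iff_compactSpace.mp hX
  have : Nonempty X := hne.to_subtype
  exact not_isMeagre_of_isOpen (s := (univ : Set X)) isOpen_univ univ_nonempty
    (hD.mono fun x _ => hXD x.2)

theorem subset_union_image_of_image_subset_image {α β : Type*} {f : α → β} {τ : α → α}
    (hfib : ∀ x y, f x = f y → y = x ∨ y = τ x) {S P : Set α} (h : f '' S ⊆ f '' P) :
    S ⊆ P ∪ τ '' P := by
  intro x hx
  obtain ⟨p, hp, hpx⟩ := h (mem_image_of_mem f hx)
  rcases hfib p x hpx with rfl | rfl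
  exacts [Or.inl hp, Or.inr (mem_image_of_mem τ hp)]

namespace IndecomposableC

variable {X : Set ℂ}

theorem eq_of_union_eq (hX : IndecomposableC X) {A B : Set ℂ} (hA : IsContinuum A)
    (hB : IsContinuum B) (hAB : A ∪ B = X) (hAX : A ≠ X) : B = X := by
  by_contra hBX
  exact hX.2.2 ⟨A, B, hA, hB, hAB ▸ subset_union_left, hAB ▸ subset_union_right, hAX, hBX, hAB⟩

theorem subset_closure_diff (hX : IndecomposableC X) {P : Set ℂ} (hP : IsContinuum P)
    (hPX : P ⊆ X) (hPne : P ≠ X) : X ⊆ closure (X \ P) := by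
  have hXcl : IsClosed X := hX.1.1.isClosed
  by_cases hpre : IsPreconnected (X \ P)
  · have hQX : closure (X \ P) ⊆ X := closure_minimal sdiff_subset hXcl
    have hQ : IsContinuum (closure (X \ P)) :=
      ⟨hX.1.1.of_isClosed_subset isClosed_closure hQX,
        (sdiff_nonempty.mpr fun h => hPne (hPX.antisymm h)).closure, hpre.closure⟩
    refine (hX.eq_of_union_eq hP hQ ((union_subset hPX hQX).antisymm fun x hx => ?_) hPne).ge
    by_cases hxP : x ∈ P
    exacts [Or.inl hxP, Or.inr (subset_closure ⟨hx, hxP⟩)]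
  -- A closed separation `t, t'` of `X \ P` splits `X` into two proper subcontinua meeting in `P`.
  rw [isPreconnected_closed_iff] at hpre
  push Not at hpre
  obtain ⟨t, t', ht, ht', hcover, hPt, hPt', hdisj⟩ := hpre
  have hunion : X ∩ (P ∪ t) ∪ X ∩ (P ∪ t') = X := by
    ext x
    have := @hcover x
    simp only [mem_union, mem_inter_iff, mem_sdiff] at this ⊢
    tauto
  have hinter : X ∩ (P ∪ t) ∩ (X ∩ (P ∪ t')) = P := by
    ext x
    have := @hPX x
    have : x ∉ X \ P ∩ (t ∩ t') := hdisj ▸ notMem_empty x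
    simp only [mem_union, mem_inter_iff, mem_sdiff] at this ⊢
    tauto
  have hproper : ∀ {s s' : Set ℂ}, (X \ P ∩ s').Nonempty → X \ P ∩ (s ∩ s') = ∅ →
      X ∩ (P ∪ s) ≠ X := by
    intro s s' ⟨z, ⟨hzX, hzP⟩, hzs'⟩ hss' h
    obtain hzP' | hzs := (h.ge hzX).2
    exacts [hzP hzP', hss'.subset ⟨⟨hzX, hzP⟩, hzs, hzs'⟩]
  have hA : IsContinuum (X ∩ (P ∪ t)) :=
    .of_union_of_inter (by rw [hunion]; exact hX.1) (hXcl.inter (hP.1.isClosed.union ht))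
      (hXcl.inter (hP.1.isClosed.union ht')) (by rwa [hinter])
  have hB : IsContinuum (X ∩ (P ∪ t')) :=
    .of_union_of_inter (by rw [union_comm, hunion]; exact hX.1)
      (hXcl.inter (hP.1.isClosed.union ht'))
      (hXcl.inter (hP.1.isClosed.union ht)) (by rwa [inter_comm, hinter])
  exact hproper hPt (by rwa [inter_comm t']) (hX.eq_of_union_eq hA hB hunion (hproper hPt' hdisj))
    |>.elim

theorem not_subset_union_image (hX : IndecomposableC X) {τ : ℂ → ℂ} (hτ : Continuous τ)
    (hττ : Function.Involutive τ) {P : Set ℂ} (hP : IsContinuum P) (hPX : P ⊆ X)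
    (hPne : P ≠ X) : ¬ X ⊆ P ∪ τ '' P := by
  intro hcover
  have hXτP : X ⊆ τ '' P :=
    (hX.subset_closure_diff hP hPX hPne).trans <| closure_minimal
      (fun x hx => (hcover hx.1).resolve_left hx.2) (hP.1.image hτ).isClosed
  have hτPP : τ '' P ⊆ P :=
    (image_mono (hPX.trans hXτP)).trans (hττ.leftInverse.image_image P).le
  exact hPne (hPX.antisymm (hXτP.trans hτPP))

variable {f τ : ℂ → ℂ}

theorem image_ne_of_ne (hX : IndecomposableC X) (hτ : Continuous τ) (hττ : Function.Involutive τ)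
    (hfib : ∀ x y, f x = f y → y = x ∨ y = τ x) (hfX : f '' X ⊆ X) {P : Set ℂ}
    (hP : IsContinuum P) (hPX : P ⊆ X) (hPne : P ≠ X) : f '' P ≠ X := fun hfP =>
  hX.not_subset_union_image hτ hττ hP hPX hPne
    (subset_union_image_of_image_subset_image hfib (hfP ▸ hfX))

theorem apply_mem_composant_apply (hX : IndecomposableC X) (hf : Continuous f)
    (hτ : Continuous τ) (hττ : Function.Involutive τ)
    (hfib : ∀ x y, f x = f y → y = x ∨ y = τ x) (hfX : f '' X ⊆ X) {x z : ℂ}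
    (hz : z ∈ Composant X x) : f x ∈ Composant X (f z) := by
  obtain ⟨P, ⟨hP, hPX, hPne, hxP⟩, hzP⟩ := hz
  exact ⟨f '' P, ⟨⟨hP.1.image hf, hP.2.image f hf.continuousOn⟩, (image_mono hPX).trans hfX,
    hX.image_ne_of_ne hτ hττ hfib hfX hP hPX hPne, mem_image_of_mem f hzP⟩, mem_image_of_mem f hxP⟩

end IndecomposableC

theorem exists_composant_with_image_disjoint_from_meagre_union_general
    (f τ : ℂ → ℂ)
    (hf : Continuous f)
    (hτ : Continuous τ) (hττ : ∀ x, τ (τ x) = x)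
    (hfib : ∀ x y, f x = f y → y = x ∨ y = τ x)
    (X : Set ℂ) (hX : IndecomposableC X) (hfX : f '' X = X)
    (D : Set ℂ)
    (hDunion : ∀ x ∈ D, Composant X x ⊆ D)
    (hmeagre : IsMeagre (Subtype.val ⁻¹' D : Set X)) :
    ∃ T : Set ℂ, IsComposant X T ∧ f '' T ∩ D = ∅ := by
  obtain ⟨_, hyX, hyD⟩ := hX.1.1.nonempty_diff_of_isMeagre hX.2.1.nonempty hmeagre
  obtain ⟨x, hxX, rfl⟩ := hfX.ge hyX
  refine ⟨Composant X x, ⟨x, hxX, rfl⟩, eq_empty_iff_forall_notMem.mpr ?_⟩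
  rintro _ ⟨⟨z, hz, rfl⟩, hfzD⟩
  exact hyD (hDunion _ hfzD (hX.apply_mem_composant_apply hf hτ hττ hfib hfX.le hz))

theorem exists_composant_with_image_disjoint_from_meagre_union
    (f τ : ℂ → ℂ) (c : ℂ)
    (hf : Continuous f) (hopen : IsOpenMap f)
    (hperfect : ∀ K : Set ℂ, IsCompact K → IsCompact (f ⁻¹' K))
    (hτ : Continuous τ) (hττ : ∀ x, τ (τ x) = x) (hfτ : ∀ x, f (τ x) = f x)
    (hfib : ∀ x y, f x = f y → y = x ∨ y = τ x)
    (hc : τ c = c) (hcuniq : ∀ x, τ x = x → x = c)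
    (X : Set ℂ) (hX : IndecomposableC X) (hfX : f '' X = X)
    (D : Set ℂ) (hD : D ⊆ X)
    (hDunion : ∀ x ∈ D, Composant X x ⊆ D)
    (hmeagre : IsMeagre (Subtype.val ⁻¹' D : Set X)) :
    ∃ T : Set ℂ, IsComposant X T ∧ f '' T ∩ D = ∅ :=
  exists_composant_with_image_disjoint_from_meagre_union_general f τ hf hτ hττ hfib X hX hfX D
    hDunion hmeagre
end

section
/- Let (f, τ, c) be degree −2 branched covering data and let X ⊆ ℂ be a continuum with f(X) = X. If Z ⊆ X is nowhere dense in the subspace topology of X, then for every n ∈ ℕ the set Z ∪ f(Z) ∪ f²(Z) ∪ … ∪ fⁿ(Z) is nowhere dense in X. -/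
open Set Topology

/-!
Let `N ⊆ X` be compact and nowhere dense in `X`. If `f '' N` contained a nonempty relatively
open piece `X ∩ U` of `X`, every point of `X ∩ f ⁻¹' U` would lie in `N` or be sent into `N`
by `τ`. Since `τ` is a continuous involution with `f ∘ τ = f`, points of `X ∩ f ⁻¹' U` outside
`N` are ruled out, so `X ∩ f ⁻¹' U ⊆ N`, contradicting nowhere density of `N`.
Iterating on the compact set `closure Z` and taking finite unions gives the theorem.
-/

section NowhereDense

variable {α : Type*} [TopologicalSpace α]

theorem IsNowhereDense.union {s t : Set α} (hs : IsNowhereDense s) (ht : IsNowhereDense t) :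
    IsNowhereDense (s ∪ t) := by
  have hs' := isClosed_isNowhereDense_iff_compl.mp ⟨isClosed_closure, hs.closure⟩
  have ht' := isClosed_isNowhereDense_iff_compl.mp ⟨isClosed_closure, ht.closure⟩
  have hst : IsClosed (closure s ∪ closure t) ∧ IsNowhereDense (closure s ∪ closure t) :=
    isClosed_isNowhereDense_iff_compl.mpr <| by
      rw [compl_union]
      exact ⟨hs'.1.inter ht'.1, hs'.2.inter_of_isOpen_left ht'.2 hs'.1⟩
  exact hst.2.mono (union_subset_union subset_closure subset_closure)

theorem isNowhereDense_biUnion_finset {ι : Type*} {I : Finset ι} {s : ι → Set α}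
    (hs : ∀ i ∈ I, IsNowhereDense (s i)) : IsNowhereDense (⋃ i ∈ I, s i) := by
  classical
  induction I using Finset.induction_on with
  | empty => simp
  | insert i I _ ih =>
    rw [Finset.set_biUnion_insert]
    exact (hs i (Finset.mem_insert_self i I)).union
      (ih fun j hj => hs j (Finset.mem_insert_of_mem hj))

theorem isNowhereDense_preimage_val_iff {X S : Set α} (hS : IsClosed S) :
    IsNowhereDense ((↑) ⁻¹' S : Set X) ↔ ∀ U, IsOpen U → X ∩ U ⊆ S → X ∩ U = ∅ := by
  rw [(hS.preimage continuous_subtype_val).isNowhereDense_iff]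
  constructor
  · intro h U hU hUS
    rw [← Subtype.preimage_coe_eq_empty, ← subset_empty_iff, ← h]
    exact interior_maximal (fun x hx => hUS ⟨x.2, hx⟩) (hU.preimage continuous_subtype_val)
  · intro h
    refine eq_empty_iff_forall_notMem.mpr fun x hx => ?_
    obtain ⟨V, hVS, hVo, hxV⟩ := mem_interior.mp hx
    obtain ⟨U, hU, rfl⟩ := isOpen_induced_iff.mp hVo
    have hXU : X ∩ U = ∅ := h U hU fun y hy => hVS (show (⟨y, hy.1⟩ : X) ∈ _ from hy.2)
    exact hXU.subset ⟨x.2, hxV⟩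

end NowhereDense

section BranchedCover

variable {α : Type*} [TopologicalSpace α] {f τ : α → α} {X : Set α}

theorem isNowhereDense_preimage_val_image [T2Space α] (hf : Continuous f) (hτ : Continuous τ)
    (hττ : Function.Involutive τ) (hfτ : ∀ x, f (τ x) = f x)
    (hfib : ∀ x y, f x = f y → y = x ∨ y = τ x) (hfX : f '' X = X)
    {N : Set α} (hN : IsCompact N) (hNX : N ⊆ X) (hnd : IsNowhereDense ((↑) ⁻¹' N : Set X)) :
    IsNowhereDense ((↑) ⁻¹' (f '' N) : Set X) := by
  rw [isNowhereDense_preimage_val_iff hN.isClosed] at hnd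
  rw [isNowhereDense_preimage_val_iff (hN.image hf).isClosed]
  intro U hU hUN
  have hcover : ∀ x ∈ X ∩ f ⁻¹' U, x ∈ N ∨ τ x ∈ N := by
    rintro x ⟨hxX, hxU⟩
    obtain ⟨n, hn, hnx⟩ := hUN ⟨hfX ▸ mem_image_of_mem f hxX, hxU⟩
    rcases hfib x n hnx.symm with rfl | rfl
    exacts [Or.inl hn, Or.inr hn]
  set V := f ⁻¹' U ∩ Nᶜ
  -- For `x ∈ X ∩ V` we get `τ x ∈ N ⊆ X`; near `τ x` there is `y ∈ X \ N` with `τ y ∈ V`,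
  -- and then neither `y` nor `τ y` lies in `N`.
  have hVX : X ∩ V = ∅ := by
    refine eq_empty_iff_forall_notMem.mpr fun x ⟨hxX, hxU, hxN⟩ => ?_
    have hτx : τ x ∈ N := (hcover x ⟨hxX, hxU⟩).resolve_left hxN
    obtain ⟨y, ⟨hyX, hyV⟩, hyN⟩ : ((X ∩ τ ⁻¹' V) \ N).Nonempty := by
      by_contra! h
      refine (hnd _ ((hU.preimage hf).inter hN.isClosed.isOpen_compl |>.preimage hτ)
        (sdiff_eq_empty.mp h)).subset ⟨hNX hτx, ?_⟩
      simpa [mem_preimage, hττ x] using And.intro hxU hxN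
    have hyU : y ∈ f ⁻¹' U := by simpa [mem_preimage, hfτ] using hyV.1
    exact (hcover y ⟨hyX, hyU⟩).elim hyN hyV.2
  have hXfU : X ∩ f ⁻¹' U = ∅ :=
    hnd _ (hU.preimage hf) fun x hx => by_contra fun hxN => hVX.subset ⟨hx.1, hx.2, hxN⟩
  refine eq_empty_iff_forall_notMem.mpr fun q ⟨hqX, hqU⟩ => ?_
  obtain ⟨x, hxX, rfl⟩ : q ∈ f '' X := hfX.symm ▸ hqX
  exact hXfU.subset ⟨hxX, hqU⟩

theorem isNowhereDense_preimage_val_iterate_image [T2Space α] (hf : Continuous f)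
    (hτ : Continuous τ) (hττ : Function.Involutive τ) (hfτ : ∀ x, f (τ x) = f x)
    (hfib : ∀ x y, f x = f y → y = x ∨ y = τ x) (hfX : f '' X = X)
    {N : Set α} (hN : IsCompact N) (hNX : N ⊆ X) (hnd : IsNowhereDense ((↑) ⁻¹' N : Set X))
    (i : ℕ) : IsNowhereDense ((↑) ⁻¹' (f^[i] '' N) : Set X) := by
  induction i with
  | zero => simpa using hnd
  | succ k ih =>
    rw [Function.iterate_succ', image_comp]
    exact isNowhereDense_preimage_val_image hf hτ hττ hfτ hfib hfX (hN.image (hf.iterate k))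
      ((mapsTo_iff_image_subset.mpr hfX.subset).iterate k |>.mono_left hNX).image_subset ih

end BranchedCover

theorem union_of_iterated_images_nowhere_dense_general
    (f τ : ℂ → ℂ)
    (hf : Continuous f)
    (hτ : Continuous τ) (hττ : ∀ x, τ (τ x) = x) (hfτ : ∀ x, f (τ x) = f x)
    (hfib : ∀ x y, f x = f y → y = x ∨ y = τ x)
    (X : Set ℂ) (hX : IsContinuum X) (hfX : f '' X = X)
    (Z : Set ℂ) (hZ : Z ⊆ X)
    (hnd : IsNowhereDense (Subtype.val ⁻¹' Z : Set X)) :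
    ∀ n : ℕ, IsNowhereDense
      (Subtype.val ⁻¹' (⋃ i ∈ Finset.range (n + 1), f^[i] '' Z) : Set X) := by
  intro n
  have hZX : closure Z ⊆ X := closure_minimal hZ hX.1.isClosed
  have hZc : IsCompact (closure Z) := hX.1.of_isClosed_subset isClosed_closure hZX
  have hndZ : IsNowhereDense (Subtype.val ⁻¹' closure Z : Set X) := by
    have := IsInducing.subtypeVal.closure_eq_preimage_closure_image (Subtype.val ⁻¹' Z : Set X)
    rw [Subtype.image_preimage_coe, inter_eq_right.mpr hZ] at this
    exact this ▸ hnd.closure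
  rw [preimage_iUnion₂]
  refine isNowhereDense_biUnion_finset fun i _ => ?_
  exact (isNowhereDense_preimage_val_iterate_image hf hτ hττ hfτ hfib hfX hZc hZX hndZ i).mono
    (preimage_mono (image_mono subset_closure))

theorem union_of_iterated_images_nowhere_dense
    (f τ : ℂ → ℂ) (c : ℂ)
    (hf : Continuous f) (hopen : IsOpenMap f)
    (hperfect : ∀ K : Set ℂ, IsCompact K → IsCompact (f ⁻¹' K))
    (hτ : Continuous τ) (hττ : ∀ x, τ (τ x) = x) (hfτ : ∀ x, f (τ x) = f x)
    (hfib : ∀ x y, f x = f y → y = x ∨ y = τ x)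
    (hc : τ c = c) (hcuniq : ∀ x, τ x = x → x = c)
    (X : Set ℂ) (hX : IsContinuum X) (hfX : f '' X = X)
    (Z : Set ℂ) (hZ : Z ⊆ X)
    (hnd : IsNowhereDense (Subtype.val ⁻¹' Z : Set X)) :
    ∀ n : ℕ, IsNowhereDense
      (Subtype.val ⁻¹' (⋃ i ∈ Finset.range (n + 1), f^[i] '' Z) : Set X) :=
  union_of_iterated_images_nowhere_dense_general f τ hf hτ hττ hfτ hfib X hX hfX Z hZ hnd
end

section
/- Let (f, τ, c) be degree −2 branched covering data and let X ⊆ ℂ be a continuum with f(X) = X. Suppose the set X ∩ τ(X) is nowhere dense in the subspace topology of X. Then for every n ∈ ℕ there exists a nonempty relatively open subset U of X such that fⁱ(U) ∩ τ(X) = ∅ for every i with 0 ≤ i ≤ n. -/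
open Set Topology

theorem exists_open_set_with_iterates_avoiding_sibling
    (f τ : ℂ → ℂ) (c : ℂ)
    (hf : Continuous f) (hopen : IsOpenMap f)
    (hperfect : ∀ K : Set ℂ, IsCompact K → IsCompact (f ⁻¹' K))
    (hτ : Continuous τ) (hττ : ∀ x, τ (τ x) = x) (hfτ : ∀ x, f (τ x) = f x)
    (hfib : ∀ x y, f x = f y → y = x ∨ y = τ x)
    (hc : τ c = c) (hcuniq : ∀ x, τ x = x → x = c)
    (X : Set ℂ) (hX : IsContinuum X) (hfX : f '' X = X)
    (hnd : IsNowhereDense (Subtype.val ⁻¹' (X ∩ τ '' X) : Set X)) :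
    ∀ n : ℕ, ∃ U : Set ℂ, U ⊆ X ∧ U.Nonempty ∧
      (∃ V : Set ℂ, IsOpen V ∧ U = V ∩ X) ∧
      ∀ i ≤ n, f^[i] '' U ∩ τ '' X = ∅ := by
  intro n
  have hXc : IsCompact X := hX.1
  have hXcl : IsClosed X := hXc.isClosed
  have hτXcl : IsClosed (τ '' X) := (hXc.image hτ).isClosed
  set B : Set ℂ := X ∩ τ '' X with hB
  have hBcl : IsClosed B := hXcl.inter hτXcl
  have hfXsub : ∀ x ∈ X, f x ∈ X := fun x hx => hfX ▸ mem_image_of_mem f hx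
  have hiter : ∀ i, ∀ x ∈ X, f^[i] x ∈ X := by
    intro i
    induction i with
    | zero => intro x hx; simpa using hx
    | succ i ih =>
      intro x hx
      rw [Function.iterate_succ_apply]
      exact ih _ (hfXsub x hx)
  set A : ℕ → Set ℂ := fun i => X ∩ f^[i] ⁻¹' B with hA
  have hAcl : ∀ i, IsClosed (A i) :=
    fun i => hXcl.inter (hBcl.preimage (hf.iterate i))
  -- base density fact, from nowhere density of B
  have hP0 : ∀ V : Set ℂ, IsOpen V → (V ∩ X).Nonempty → ∃ x ∈ V ∩ X, x ∉ B := by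
    intro V hV hne
    obtain ⟨z, hzV, hzX⟩ := hne
    by_contra h
    push_neg at h
    have hBsub : IsClosed (Subtype.val ⁻¹' B : Set X) :=
      hBcl.preimage continuous_subtype_val
    have hsub : (Subtype.val ⁻¹' V : Set X) ⊆ Subtype.val ⁻¹' B :=
      fun w hw => h w.1 ⟨hw, w.2⟩
    have hmem : (⟨z, hzX⟩ : X) ∈ interior (Subtype.val ⁻¹' B : Set X) :=
      interior_maximal hsub (hV.preimage continuous_subtype_val) hzV
    have : interior (closure (Subtype.val ⁻¹' B : Set X)) = ∅ := hnd
    rw [hBsub.closure_eq] at this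
    rw [this] at hmem
    exact hmem
  -- density of complements of A i
  have hP : ∀ i, ∀ V : Set ℂ, IsOpen V → (V ∩ X).Nonempty →
      ∃ x ∈ V ∩ X, x ∉ A i := by
    intro i
    induction i with
    | zero =>
      intro V hV hne
      obtain ⟨x, hxVX, hxB⟩ := hP0 V hV hne
      exact ⟨x, hxVX, fun hxA => hxB (by simpa using hxA.2)⟩
    | succ i ih =>
      intro V hV hne
      by_contra h
      push_neg at h
      obtain ⟨p, hpVX, hpB⟩ := hP0 V hV hne
      have hpτ : p ∉ τ '' X := fun hpτ => hpB ⟨hpVX.2, hpτ⟩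
      set V' : Set ℂ := V \ τ '' X with hV'
      have hV'open : IsOpen V' := hV.sdiff hτXcl
      have hpV' : p ∈ V' := ⟨hpVX.1, hpτ⟩
      -- claim : f '' V' ∩ X ⊆ A i
      have hclaim : f '' V' ∩ X ⊆ A i := by
        rintro y ⟨⟨v, hvV', rfl⟩, hyX⟩
        have hyX' : f v ∈ f '' X := by rw [hfX]; exact hyX
        obtain ⟨x, hxX, hfxy⟩ := hyX'
        rcases hfib x v hfxy with hvx | hvτ
        · -- v = x ∈ X, so v ∈ V ∩ X ⊆ A (i+1)
          have hvX : v ∈ X := hvx ▸ hxX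
          have hvA : v ∈ A (i + 1) := h v ⟨hvV'.1, hvX⟩
          refine ⟨hfXsub v hvX, ?_⟩
          have h2 := hvA.2
          simp only [Set.mem_preimage] at h2 ⊢
          rwa [Function.iterate_succ_apply] at h2
        · exact absurd ⟨x, hxX, hvτ.symm⟩ hvV'.2
      have hne' : (f '' V' ∩ X).Nonempty :=
        ⟨f p, mem_image_of_mem f hpV', hfXsub p hpVX.2⟩
      obtain ⟨q, hqVX, hqA⟩ := ih (f '' V') (hopen V' hV'open) hne'
      exact hqA (hclaim hqVX)
  -- simultaneous avoidance
  have hsim : ∀ m, ∀ V : Set ℂ, IsOpen V → (V ∩ X).Nonempty →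
      ∃ x ∈ V ∩ X, ∀ i ≤ m, x ∉ A i := by
    intro m
    induction m with
    | zero =>
      intro V hV hne
      obtain ⟨x, hxVX, hxA⟩ := hP 0 V hV hne
      exact ⟨x, hxVX, fun i hi => by simpa [Nat.le_zero.mp hi] using hxA⟩
    | succ m ih =>
      intro V hV hne
      set W : Set ℂ := V ∩ ⋂ i ∈ Finset.range (m + 1), (A i)ᶜ with hW
      have hWopen : IsOpen W :=
        hV.inter (isOpen_biInter_finset fun i _ => (hAcl i).isOpen_compl)
      obtain ⟨x, hxVX, hxA⟩ := ih V hV hne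
      have hxW : x ∈ W ∩ X := by
        refine ⟨⟨hxVX.1, ?_⟩, hxVX.2⟩
        simp only [Set.mem_iInter]
        intro i hi
        exact hxA i (Nat.lt_succ_iff.mp (Finset.mem_range.mp hi))
      obtain ⟨y, hyWX, hyA⟩ := hP (m + 1) W hWopen ⟨x, hxW⟩
      refine ⟨y, ⟨hyWX.1.1, hyWX.2⟩, fun i hi => ?_⟩
      rcases Nat.lt_succ_iff_lt_or_eq.mp (Nat.lt_succ_of_le hi) with hlt | heq
      · have := hyWX.1.2
        simp only [Set.mem_iInter] at this
        exact this i (Finset.mem_range.mpr hlt)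
      · exact heq ▸ hyA
  -- conclude
  have hXne : X.Nonempty := hX.2.nonempty
  obtain ⟨x, hxVX, hxA⟩ := hsim n univ isOpen_univ (by simpa using hXne)
  refine ⟨(⋂ i ∈ Finset.range (n + 1), (A i)ᶜ) ∩ X, inter_subset_right, ?_, ?_, ?_⟩
  · refine ⟨x, ?_, hxVX.2⟩
    simp only [Set.mem_iInter]
    intro i hi
    exact hxA i (Nat.lt_succ_iff.mp (Finset.mem_range.mp hi))
  · exact ⟨_, isOpen_biInter_finset fun i _ => (hAcl i).isOpen_compl, rfl⟩
  · intro i hi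
    rw [Set.eq_empty_iff_forall_notMem]
    rintro y ⟨⟨z, hzU, rfl⟩, hyτ⟩
    have hzX : z ∈ X := hzU.2
    have hzA : z ∉ A i := by
      have := hzU.1
      simp only [Set.mem_iInter] at this
      exact this i (Finset.mem_range.mpr (Nat.lt_succ_of_le hi))
    exact hzA ⟨hzX, hiter i z hzX, hyτ⟩
end

section
/- The map f : ℂ → ℂ defined by f(z) = φ(z) + T(Im φ(z)), where φ(0) = 0, φ(z) = z²/|z| for z ≠ 0, and T(s) = 2|s|/√3 + 2, has no periodic points: for every z ∈ ℂ and every integer n ≥ 1, fⁿ(z) ≠ z. -/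
open Complex

/-- The degree-two angle-doubling map `φ(r e^{iθ}) = r e^{2iθ}`. -/
noncomputable def phiMap (z : ℂ) : ℂ :=
  if z = 0 then 0 else z ^ 2 / (‖z‖ : ℂ)

/-- The translation amount `T(s) = 2|s|/√3 + 2`. -/
noncomputable def Tshift (s : ℝ) : ℝ := 2 * |s| / Real.sqrt 3 + 2

/-- The map `f(z) = φ(z) + T(Im φ(z))`. -/
noncomputable def fMap (z : ℂ) : ℂ := phiMap z + (Tshift ((phiMap z).im) : ℂ)

/-!
Let `u = Re - |Im|/√3`, so that `u ≥ 0` is the sector `|arg z| ≤ π/3`. There `u ∘ f ≥ u + 2`,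
so an orbit that ever enters this sector has `u` strictly increasing from then on and cannot
return. Since `u (f z) < 0` forces `√3 |Re z| < |Im z|`, an orbit that never enters it stays in
the sector `π/3 < |arg z| < 2π/3`, where doubling the angle shrinks `|Im|`; so `|Im|` strictly
decreases along the whole orbit, which again rules out a return.
-/

theorem Function.not_isPeriodicPt_of_mapsTo_of_lt_apply {α β : Type*} [Preorder β]
    {f : α → α} {V : α → β} {s : Set α} (hs : Set.MapsTo f s s)
    (hV : ∀ y ∈ s, V y < V (f y)) {x : α} (hx : x ∈ s) {n : ℕ} (hn : 0 < n) :
    ¬ Function.IsPeriodicPt f n x := by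
  intro hper
  have hmono : StrictMono fun m => V (f^[m] x) := strictMono_nat_of_lt_succ fun m => by
    simpa only [Function.iterate_succ_apply'] using hV _ (hs.iterate m hx)
  simpa only [Function.iterate_zero_apply, hper.eq, lt_self_iff_false] using hmono hn

noncomputable def lyapunov (w : ℂ) : ℝ := w.re - |w.im| / √3

lemma phiMap_re (z : ℂ) : (phiMap z).re = (z.re ^ 2 - z.im ^ 2) / ‖z‖ := by
  by_cases hz : z = 0
  · simp [phiMap, hz]
  · rw [phiMap, if_neg hz, div_ofReal_re, sq, mul_re, sq, sq]

lemma phiMap_im (z : ℂ) : (phiMap z).im = 2 * z.re * z.im / ‖z‖ := by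
  by_cases hz : z = 0
  · simp [phiMap, hz]
  · rw [phiMap, if_neg hz, div_ofReal_im, sq, mul_im]
    ring

lemma lyapunov_fMap (z : ℂ) :
    lyapunov (fMap z) = (phiMap z).re + |(phiMap z).im| / √3 + 2 := by
  simp only [lyapunov, fMap, Tshift, add_re, add_im, ofReal_re, ofReal_im, add_zero]
  ring

/-- The factorization behind both sector estimates. -/
lemma phiMap_re_add_abs_im_div_sqrt_three_mul (z : ℂ) :
    ((phiMap z).re + |(phiMap z).im| / √3) * (√3 * ‖z‖) =
      (√3 * |z.re| - |z.im|) * (|z.re| + √3 * |z.im|) := by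
  rcases eq_or_ne z 0 with rfl | hz
  · simp [phiMap]
  have hr : ‖z‖ ≠ 0 := norm_ne_zero_iff.mpr hz
  have hs : √3 ≠ 0 := by positivity
  rw [phiMap_re, phiMap_im, abs_div, abs_norm, abs_mul, abs_mul, abs_two]
  field_simp
  rw [← sq_abs z.re, ← sq_abs z.im]
  linear_combination (-(|z.re| * |z.im|)) * Real.sq_sqrt zero_le_three

lemma lyapunov_add_two_le_lyapunov_fMap {z : ℂ} (hz : 0 ≤ lyapunov z) :
    lyapunov z + 2 ≤ lyapunov (fMap z) := by
  rw [lyapunov_fMap, add_le_add_iff_right]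
  rcases eq_or_ne z 0 with rfl | hz0
  · simp [lyapunov, phiMap]
  have hr : 0 < √3 * ‖z‖ := by positivity
  have hs : 0 < √3 := by positivity
  rw [← mul_le_mul_iff_of_pos_right hr, phiMap_re_add_abs_im_div_sqrt_three_mul]
  have hsector : |z.im| ≤ √3 * z.re := by
    rw [lyapunov, sub_nonneg, div_le_iff₀ hs] at hz
    linarith
  have hre : 0 ≤ z.re := by nlinarith [abs_nonneg z.im]
  have hnorm : ‖z‖ ≤ z.re + √3 * |z.im| := by
    refine le_of_pow_le_pow_left₀ two_ne_zero (by positivity) ?_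
    rw [Complex.sq_norm, normSq_apply]
    nlinarith [Real.sq_sqrt zero_le_three, sq_abs z.im,
      mul_nonneg (mul_nonneg hre (abs_nonneg z.im)) hs.le]
  calc lyapunov z * (√3 * ‖z‖) = (√3 * z.re - |z.im|) * ‖z‖ := by
        rw [lyapunov]; field_simp
    _ ≤ (√3 * |z.re| - |z.im|) * (|z.re| + √3 * |z.im|) := by
        rw [abs_of_nonneg hre]
        exact mul_le_mul_of_nonneg_left hnorm (by linarith)

lemma sqrt_three_mul_abs_re_lt_abs_im_of_lyapunov_fMap_neg {z : ℂ}
    (hz : lyapunov (fMap z) < 0) : √3 * |z.re| < |z.im| := by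
  rw [lyapunov_fMap] at hz
  by_contra! hsector
  have hfac : 0 ≤ (√3 * |z.re| - |z.im|) * (|z.re| + √3 * |z.im|) :=
    mul_nonneg (by linarith) (by positivity)
  rw [← phiMap_re_add_abs_im_div_sqrt_three_mul] at hfac
  have hr : 0 < √3 * ‖z‖ := by
    have hz0 : z ≠ 0 := by rintro rfl; simp [phiMap] at hz; linarith
    exact mul_pos (by positivity) (norm_pos_iff.mpr hz0)
  nlinarith [(mul_nonneg_iff_of_pos_right hr).mp hfac]

lemma abs_im_fMap_lt {z : ℂ} (hz : √3 * |z.re| < |z.im|) : |(fMap z).im| < |z.im| := by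
  have hy : 0 < |z.im| := (by positivity : 0 ≤ √3 * |z.re|).trans_lt hz
  have hsq : 3 * z.re ^ 2 < z.im ^ 2 := by
    have := pow_lt_pow_left₀ hz (by positivity) two_ne_zero
    rwa [mul_pow, Real.sq_sqrt zero_le_three, sq_abs, sq_abs] at this
  have hnorm : 2 * |z.re| < ‖z‖ := by
    refine lt_of_pow_lt_pow_left₀ 2 (norm_nonneg z) ?_
    rw [Complex.sq_norm, normSq_apply, mul_pow, sq_abs]
    nlinarith
  have him : (fMap z).im = (phiMap z).im := by simp [fMap]
  have hr : 0 < ‖z‖ := by linarith [abs_nonneg z.re]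
  rw [him, phiMap_im, abs_div, abs_norm, abs_mul, abs_mul, abs_two, div_lt_iff₀ hr]
  nlinarith [mul_lt_mul_of_pos_left hnorm hy]

theorem fMap_has_no_periodic_points :
    ∀ (z : ℂ) (n : ℕ), 1 ≤ n → fMap^[n] z ≠ z := by
  intro z n hn (hper : Function.IsPeriodicPt fMap n z)
  by_cases hneg : ∀ m, lyapunov (fMap^[m] z) < 0
  · refine Function.not_isPeriodicPt_of_mapsTo_of_lt_apply
      (s := {w | ∀ m, lyapunov (fMap^[m] w) < 0}) (V := fun w => -|w.im|)
      (fun w hw m => ?_) (fun w hw => ?_) hneg hn hper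
    · simpa only [← Function.iterate_succ_apply] using hw (m + 1)
    · exact neg_lt_neg (abs_im_fMap_lt
        (sqrt_three_mul_abs_re_lt_abs_im_of_lyapunov_fMap_neg (hw 1)))
  · obtain ⟨k, hk⟩ := not_forall.mp hneg
    refine Function.not_isPeriodicPt_of_mapsTo_of_lt_apply (s := {w | 0 ≤ lyapunov w})
      (V := lyapunov) (fun w (hw : 0 ≤ lyapunov w) => ?_) (fun w (hw : 0 ≤ lyapunov w) => ?_)
      (not_lt.mp hk) hn (hper.apply_iterate k)
    · show 0 ≤ lyapunov (fMap w)
      linarith [lyapunov_add_two_le_lyapunov_fMap hw]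
    · linarith [lyapunov_add_two_le_lyapunov_fMap hw]
end

section
/- For the map f : ℂ → ℂ defined by f(z) = φ(z) + T(Im φ(z)), where φ(0) = 0, φ(z) = z²/|z| for z ≠ 0, and T(s) = 2|s|/√3 + 2, every orbit escapes to infinity: for every z ∈ ℂ, |fⁿ(z)| → ∞ as n → ∞. -/
open Complex

/-!
Let `S = {z : (Im z)² ≤ 3 (Re z)²}` be the double sector of half-angle `π/3` around the real
axis. On `S` the angle-doubling `φ` lands in the sector `|arg| ≤ 2π/3`, where the horizontal
shift by `T` pushes the modulus up by at least `1`; conversely, `f z` can only leave `S` if the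
modulus drops by at least `1`. Hence `f` maps `S` into itself, every orbit enters `S` (the
modulus cannot drop by `1` forever), and from then on it grows by at least `1` per step.
-/

open Filter

section GrowOrDrop

variable {α : Type*} {g : α → α} {ν : α → ℝ} {S : Set α}

lemma mapsTo_of_grow_of_drop (hgrow : ∀ x ∈ S, ν x + 1 ≤ ν (g x))
    (hdrop : ∀ x, g x ∉ S → ν (g x) + 1 ≤ ν x) : Set.MapsTo g S S := by
  intro x hx
  by_contra hgx
  linarith [hgrow x hx, hdrop x hgx]

lemma add_le_iterate_of_grow (hS : Set.MapsTo g S S) (hgrow : ∀ x ∈ S, ν x + 1 ≤ ν (g x))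
    {x : α} (hx : x ∈ S) (n : ℕ) : ν x + n ≤ ν (g^[n] x) := by
  induction n with
  | zero => simp
  | succ n ih =>
    rw [Function.iterate_succ_apply']
    push_cast
    linarith [hgrow _ (hS.iterate n hx)]

lemma exists_iterate_mem_of_drop (hν : ∀ x, 0 ≤ ν x)
    (hdrop : ∀ x, g x ∉ S → ν (g x) + 1 ≤ ν x) (x : α) : ∃ N, g^[N] x ∈ S := by
  by_contra! hout
  have hdecay (n : ℕ) : ν (g^[n] x) + n ≤ ν x := by
    induction n with
    | zero => simp
    | succ n ih =>
      have := hdrop (g^[n] x) (Function.iterate_succ_apply' g n x ▸ hout (n + 1))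
      rw [Function.iterate_succ_apply']
      push_cast
      linarith
  obtain ⟨n, hn⟩ := exists_nat_gt (ν x)
  linarith [hdecay n, hν (g^[n] x)]

theorem tendsto_iterate_atTop_of_grow_of_drop (hν : ∀ x, 0 ≤ ν x)
    (hgrow : ∀ x ∈ S, ν x + 1 ≤ ν (g x)) (hdrop : ∀ x, g x ∉ S → ν (g x) + 1 ≤ ν x)
    (x : α) : Tendsto (fun n => ν (g^[n] x)) atTop atTop := by
  obtain ⟨N, hN⟩ := exists_iterate_mem_of_drop hν hdrop x
  have hS := mapsTo_of_grow_of_drop hgrow hdrop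
  refine tendsto_atTop_mono' atTop ?_
    (tendsto_atTop_add_const_right _ (-(N : ℝ)) tendsto_natCast_atTop_atTop)
  filter_upwards [eventually_ge_atTop N] with n hn
  have hgrowN := add_le_iterate_of_grow hS hgrow hN (n - N)
  rw [← Function.iterate_add_apply, Nat.sub_add_cancel hn, Nat.cast_sub hn] at hgrowN
  linarith [hν (g^[N] x)]

end GrowOrDrop

section ShiftInequalities

/-! Here `X ± i√3 b` stands for `φ(z)` with `b ≥ 0`, `r = |z|`, and `n = |f z|`. -/

variable {X b r n : ℝ}

lemma add_one_le_of_sq_eq_shift (hb : 0 ≤ b) (hr : 0 ≤ r) (hn : 0 ≤ n)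
    (hXr : X ^ 2 + 3 * b ^ 2 = r ^ 2) (hsector : 0 ≤ r * (2 * X + r))
    (hnX : n ^ 2 = (X + 2 * b + 2) ^ 2 + 3 * b ^ 2) : r + 1 ≤ n := by
  have hX : 0 ≤ 2 * X + r := by
    rcases hr.eq_or_lt with rfl | hr
    · nlinarith
    · exact nonneg_of_mul_nonneg_right (by linarith) hr
  have hsq : (r + 1) ^ 2 ≤ n ^ 2 := by
    rcases le_or_gt 0 X with hX0 | hX0
    · have : r ≤ X + 2 * b := by nlinarith
      nlinarith
    · have : -X ≤ b := by nlinarith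
      have : r ≤ 2 * b := by nlinarith
      nlinarith
  exact le_of_sq_le_sq hsq hn

lemma add_one_le_of_sq_eq_shift_of_outside (hb : 0 ≤ b) (hr : 0 ≤ r)
    (hXr : X ^ 2 + 3 * b ^ 2 = r ^ 2) (houtside : (X + 2 * b + 2) ^ 2 < b ^ 2)
    (hnX : n ^ 2 = (X + 2 * b + 2) ^ 2 + 3 * b ^ 2) : n + 1 ≤ r := by
  have hX : X + 2 < -b := by nlinarith
  have hr_le : r ≤ b - X := by nlinarith
  have hsq : n ^ 2 ≤ (r - 1) ^ 2 := by
    nlinarith [mul_nonneg hb (by linarith : (0 : ℝ) ≤ -X - b - 2)]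
  linarith [le_of_sq_le_sq hsq (by nlinarith : (0 : ℝ) ≤ r - 1)]

end ShiftInequalities

def doubleSector : Set ℂ := {z | z.im ^ 2 ≤ 3 * z.re ^ 2}

lemma norm_phiMap (z : ℂ) : ‖phiMap z‖ = ‖z‖ := by
  unfold phiMap
  split_ifs with hz
  · simp [hz]
  · rw [norm_div, norm_pow, norm_real, norm_norm, sq, mul_div_assoc,
      div_self (norm_ne_zero_iff.2 hz), mul_one]

lemma re_phiMap_mul_norm (z : ℂ) : (phiMap z).re * ‖z‖ = z.re ^ 2 - z.im ^ 2 := by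
  unfold phiMap
  split_ifs with hz
  · simp [hz]
  · rw [div_ofReal_re, div_mul_cancel₀ _ (norm_ne_zero_iff.2 hz)]
    simp [sq]

lemma sq_norm_eq_re_sq_add_im_sq (z : ℂ) : ‖z‖ ^ 2 = z.re ^ 2 + z.im ^ 2 := by
  rw [Complex.sq_norm, normSq_apply]
  ring

lemma sq_eq_three_mul_sq_abs_div_sqrt_three (s : ℝ) : s ^ 2 = 3 * (|s| / √3) ^ 2 := by
  rw [div_pow, sq_abs, Real.sq_sqrt (by norm_num : (0 : ℝ) ≤ 3)]
  ring

lemma re_fMap (z : ℂ) :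
    (fMap z).re = (phiMap z).re + 2 * (|(phiMap z).im| / √3) + 2 := by
  simp only [fMap, Tshift, add_re, ofReal_re]
  ring

lemma im_fMap (z : ℂ) : (fMap z).im = (phiMap z).im := by
  simp [fMap]

lemma shift_coordinates (z : ℂ) :
    let X := (phiMap z).re
    let b := |(phiMap z).im| / √3
    X ^ 2 + 3 * b ^ 2 = ‖z‖ ^ 2 ∧ (fMap z).re = X + 2 * b + 2 ∧ (fMap z).im ^ 2 = 3 * b ^ 2 ∧
      ‖fMap z‖ ^ 2 = (X + 2 * b + 2) ^ 2 + 3 * b ^ 2 := by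
  have hY := sq_eq_three_mul_sq_abs_div_sqrt_three (phiMap z).im
  refine ⟨?_, re_fMap z, by rw [im_fMap, hY], ?_⟩
  · rw [← norm_phiMap, sq_norm_eq_re_sq_add_im_sq, hY]
  · rw [sq_norm_eq_re_sq_add_im_sq, re_fMap, im_fMap, hY]

lemma norm_add_one_le_norm_fMap {z : ℂ} (hz : z ∈ doubleSector) : ‖z‖ + 1 ≤ ‖fMap z‖ := by
  obtain ⟨hXr, -, -, hn⟩ := shift_coordinates z
  have hsector : 0 ≤ ‖z‖ * (2 * (phiMap z).re + ‖z‖) := by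
    have := re_phiMap_mul_norm z
    have := sq_norm_eq_re_sq_add_im_sq z
    have : z.im ^ 2 ≤ 3 * z.re ^ 2 := hz
    nlinarith
  exact add_one_le_of_sq_eq_shift (by positivity) (norm_nonneg _) (norm_nonneg _) hXr hsector hn

lemma norm_fMap_add_one_le {z : ℂ} (hz : fMap z ∉ doubleSector) : ‖fMap z‖ + 1 ≤ ‖z‖ := by
  obtain ⟨hXr, hre, him, hn⟩ := shift_coordinates z
  have houtside : 3 * (fMap z).re ^ 2 < (fMap z).im ^ 2 := not_le.1 hz
  rw [hre, him] at houtside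
  exact add_one_le_of_sq_eq_shift_of_outside (by positivity) (norm_nonneg _) hXr (by linarith) hn

theorem fMap_orbits_escape_to_infinity :
    ∀ z : ℂ, Filter.Tendsto (fun n : ℕ => ‖fMap^[n] z‖)
      Filter.atTop Filter.atTop :=
  tendsto_iterate_atTop_of_grow_of_drop (fun _ => norm_nonneg _)
    (fun _ => norm_add_one_le_norm_fMap) (fun _ => norm_fMap_add_one_le)
end

section
/- For the map f : ℂ → ℂ defined by f(z) = φ(z) + T(Im φ(z)), where φ(0) = 0, φ(z) = z²/|z| for z ≠ 0, and T(s) = 2|s|/√3 + 2, and for the closed sector B̄ = {z ∈ ℂ : |Im z| ≤ √3·Re z}, one has f(B̄) = f(−B̄) = {w ∈ ℂ : w − 2 ∈ B̄}; that is, the image of B̄ (and equally of its reflection −B̄) under f is exactly the translate of B̄ by two units to the right. -/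
open Complex

/-- The closed sector of points with argument in `[-π/3, π/3]` (and `0`). -/
def closedSector : Set ℂ := {z : ℂ | |z.im| ≤ Real.sqrt 3 * z.re}

/-!
`φ` doubles arguments and preserves moduli, so it maps `B̄` onto the sector `W` of points with
argument in `[-2π/3, 2π/3]`; a preimage of `v ∈ W` is a positive multiple of `‖v‖ + v`, whose
square is `2 (‖v‖ + Re v) v`. The map `h(x + iy) = x + T(y) + iy` is a bijection of `ℂ` with
`h⁻¹(2 + B̄) = W`, hence `f(B̄) = h(W) = 2 + B̄`. Since `φ` is even, the same holds for `-B̄`.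
-/

/-- The sector of points with argument in `[-2π/3, 2π/3]`, together with `0`. -/
def wideSector : Set ℂ := {v : ℂ | 0 ≤ Real.sqrt 3 * v.re + |v.im|}

lemma phiMap_eq (z : ℂ) : phiMap z = z ^ 2 / (‖z‖ : ℂ) := by
  by_cases hz : z = 0 <;> simp [phiMap, hz]

lemma phiMap_neg (z : ℂ) : phiMap (-z) = phiMap z := by
  simp only [phiMap_eq, neg_sq, norm_neg]

lemma phiMap_ofReal_mul {t : ℝ} (ht : 0 ≤ t) (z : ℂ) : phiMap (t * z) = t * phiMap z := by
  rcases ht.eq_or_lt with rfl | ht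
  · simp [phiMap_eq]
  rw [phiMap_eq, phiMap_eq, norm_mul, Complex.norm_real, Real.norm_of_nonneg ht.le]
  by_cases hz : z = 0
  · simp [hz]
  have : (t : ℂ) ≠ 0 := by exact_mod_cast ht.ne'
  have : ((‖z‖ : ℝ) : ℂ) ≠ 0 := by exact_mod_cast norm_ne_zero_iff.2 hz
  push_cast
  field_simp

lemma ofReal_mul_mem_closedSector {t : ℝ} (ht : 0 ≤ t) {z : ℂ} (hz : z ∈ closedSector) :
    (t * z : ℂ) ∈ closedSector := by
  change |(t * z : ℂ).im| ≤ Real.sqrt 3 * (t * z : ℂ).re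
  rw [Complex.re_ofReal_mul, Complex.im_ofReal_mul, abs_mul, abs_of_nonneg ht, mul_left_comm]
  exact mul_le_mul_of_nonneg_left hz ht

lemma ofReal_mul_mem_wideSector {t : ℝ} (ht : 0 ≤ t) {v : ℂ} (hv : v ∈ wideSector) :
    (t * v : ℂ) ∈ wideSector := by
  change 0 ≤ Real.sqrt 3 * (t * v : ℂ).re + |(t * v : ℂ).im|
  rw [Complex.re_ofReal_mul, Complex.im_ofReal_mul, abs_mul, abs_of_nonneg ht, mul_left_comm,
    ← mul_add]
  exact mul_nonneg ht hv

lemma sq_mem_wideSector {z : ℂ} (hz : z ∈ closedSector) : z ^ 2 ∈ wideSector := by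
  have hz : |z.im| ≤ Real.sqrt 3 * z.re := hz
  have hre : 0 ≤ z.re := nonneg_of_mul_nonneg_right ((abs_nonneg _).trans hz) (by positivity)
  change 0 ≤ Real.sqrt 3 * (z ^ 2).re + |(z ^ 2).im|
  have hfactor : Real.sqrt 3 * (z ^ 2).re + |(z ^ 2).im|
      = (Real.sqrt 3 * z.re - |z.im|) * (z.re + Real.sqrt 3 * |z.im|) := by
    rw [sq, Complex.mul_re, Complex.mul_im, show z.re * z.im + z.im * z.re = 2 * z.re * z.im by ring,
      abs_mul, abs_of_nonneg (by positivity : (0 : ℝ) ≤ 2 * z.re)]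
    linear_combination Real.sqrt 3 * (sq_abs z.im) - z.re * |z.im| * Real.sq_sqrt zero_le_three
  rw [hfactor]
  exact mul_nonneg (sub_nonneg.2 hz) (by positivity)

lemma phiMap_mem_wideSector {z : ℂ} (hz : z ∈ closedSector) : phiMap z ∈ wideSector := by
  rw [phiMap_eq, div_eq_inv_mul, ← Complex.ofReal_inv]
  exact ofReal_mul_mem_wideSector (by positivity) (sq_mem_wideSector hz)

lemma norm_add_two_mul_re_nonneg {v : ℂ} (hv : v ∈ wideSector) : 0 ≤ ‖v‖ + 2 * v.re := by
  have hv : 0 ≤ Real.sqrt 3 * v.re + |v.im| := hv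
  rcases le_or_gt 0 v.re with hre | hre
  · positivity
  have h3 : 3 * v.re ^ 2 ≤ v.im ^ 2 := by
    have h0 : 0 ≤ Real.sqrt 3 * -v.re := mul_nonneg (Real.sqrt_nonneg 3) (by linarith)
    have := pow_le_pow_left₀ h0 (by linarith) 2
    rwa [mul_pow, Real.sq_sqrt zero_le_three, neg_sq, sq_abs] at this
  have h4 : (2 * v.re) ^ 2 ≤ ‖v‖ ^ 2 := by
    rw [Complex.sq_norm, Complex.normSq_apply]
    nlinarith
  linarith [neg_abs_le (2 * v.re), abs_le_of_sq_le_sq h4 (norm_nonneg v)]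

lemma norm_add_self_sq (v : ℂ) : ((‖v‖ : ℂ) + v) ^ 2 = 2 * (‖v‖ + v.re : ℝ) * v := by
  have h := Complex.sq_norm v
  rw [Complex.normSq_apply] at h
  apply Complex.ext <;> simp only [sq, Complex.mul_re, Complex.mul_im, Complex.add_re, Complex.add_im,
    Complex.ofReal_re, Complex.ofReal_im, Complex.re_ofNat, Complex.im_ofNat]
  · linear_combination h
  · ring

lemma norm_add_self_mem_closedSector {v : ℂ} (hv : v ∈ wideSector) :
    ((‖v‖ : ℂ) + v) ∈ closedSector := by
  have h := Complex.sq_norm v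
  rw [Complex.normSq_apply] at h
  have h2 := norm_add_two_mul_re_nonneg hv
  have hR : 0 ≤ ‖v‖ + v.re := by linarith [Complex.abs_re_le_norm v, neg_abs_le v.re]
  change |((‖v‖ : ℂ) + v).im| ≤ Real.sqrt 3 * ((‖v‖ : ℂ) + v).re
  simp only [Complex.add_im, Complex.ofReal_im, zero_add, Complex.add_re, Complex.ofReal_re]
  refine abs_le_of_sq_le_sq ?_ (by positivity)
  rw [mul_pow, Real.sq_sqrt zero_le_three]
  nlinarith [mul_nonneg hR h2]

lemma exists_phiMap_eq {v : ℂ} (hv : v ∈ wideSector) : ∃ z ∈ closedSector, phiMap z = v := by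
  rcases eq_or_ne v 0 with rfl | hv0
  · exact ⟨0, by simp [closedSector], by simp [phiMap]⟩
  have hc : 0 < ‖v‖ + v.re := by linarith [norm_add_two_mul_re_nonneg hv, norm_pos_iff.2 hv0]
  set u : ℂ := ‖v‖ + v with hu
  have hu0 : u ≠ 0 := fun h ↦ hc.ne' (by simpa [hu] using congr_arg Complex.re h)
  refine ⟨(‖u‖ / (2 * (‖v‖ + v.re)) : ℝ) * u,
    ofReal_mul_mem_closedSector (by positivity) (norm_add_self_mem_closedSector hv), ?_⟩
  rw [phiMap_ofReal_mul (by positivity), phiMap_eq, hu, norm_add_self_sq, ← hu]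
  have : ((‖v‖ + v.re : ℝ) : ℂ) ≠ 0 := by exact_mod_cast hc.ne'
  have : ((‖u‖ : ℝ) : ℂ) ≠ 0 := by exact_mod_cast norm_ne_zero_iff.2 hu0
  simp only [Complex.ofReal_div, Complex.ofReal_mul, Complex.ofReal_ofNat]
  field_simp

lemma phiMap_image_closedSector : phiMap '' closedSector = wideSector :=
  Set.Subset.antisymm (Set.image_subset_iff.2 fun _ ↦ phiMap_mem_wideSector)
    fun _ hv ↦ exists_phiMap_eq hv

noncomputable def hMap (v : ℂ) : ℂ := v + (Tshift v.im : ℂ)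

lemma hMap_surjective : Function.Surjective hMap := fun w ↦
  ⟨w - (Tshift w.im : ℂ), by simp [hMap]⟩

lemma hMap_preimage_eq_wideSector : hMap ⁻¹' {w : ℂ | w - 2 ∈ closedSector} = wideSector := by
  ext v
  change |(hMap v - 2).im| ≤ Real.sqrt 3 * (hMap v - 2).re ↔ 0 ≤ Real.sqrt 3 * v.re + |v.im|
  have hre : Real.sqrt 3 * (hMap v - 2).re = Real.sqrt 3 * v.re + 2 * |v.im| := by
    simp only [hMap, Tshift, Complex.sub_re, Complex.add_re, Complex.ofReal_re, Complex.re_ofNat]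
    field_simp
    ring
  have him : (hMap v - 2).im = v.im := by simp [hMap]
  rw [hre, him]
  constructor <;> intro h <;> linarith

lemma hMap_image_wideSector : hMap '' wideSector = {w : ℂ | w - 2 ∈ closedSector} := by
  rw [← hMap_preimage_eq_wideSector, Set.image_preimage_eq _ hMap_surjective]

theorem fMap_image_of_closed_sector :
    fMap '' closedSector = {w : ℂ | w - 2 ∈ closedSector} ∧
    fMap '' {z : ℂ | -z ∈ closedSector} = {w : ℂ | w - 2 ∈ closedSector} := by
  have hcomp : fMap = hMap ∘ phiMap := rfl
  have hsector : fMap '' closedSector = {w : ℂ | w - 2 ∈ closedSector} := by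
    rw [hcomp, Set.image_comp, phiMap_image_closedSector, hMap_image_wideSector]
  refine ⟨hsector, ?_⟩
  have heven : fMap ∘ Neg.neg = fMap := funext fun z ↦ by simp [fMap, phiMap_neg]
  change fMap '' (-closedSector) = _
  rw [← Set.image_neg_eq_neg, ← Set.image_comp, heven, hsector]
end

section
/- The map f : ℂ → ℂ defined by f(z) = φ(z) + T(Im φ(z)), where φ(0) = 0, φ(z) = z²/|z| for z ≠ 0, and T(s) = 2|s|/√3 + 2, is a continuous open map such that f⁻¹({2}) = {0} and, for every w ∈ ℂ with w ≠ 2, the fiber f⁻¹({w}) contains exactly two points (so f is a two-to-one branched covering of the plane branched at 0, with critical value 2). -/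
/-!
Write `ψ(w) = w / √|w|` and `h(z) = z + T(Im z)`. Then `φ = ψ ∘ (· ^ 2)`, so `f = H ∘ (· ^ 2)`
with `H = h ∘ ψ`. Both `ψ` (inverse `w ↦ |w| w`) and `h` (which preserves imaginary parts, so is
inverted by `z ↦ z - T(Im z)`) are homeomorphisms of the plane, and `H 0 = T 0 = 2`. Hence `f`
inherits continuity and openness from `z ↦ z ^ 2`, and `f⁻¹{w}` is the set of square roots of
`H⁻¹ w`: the point `0` when `w = 2`, and a pair `±c` otherwise.
-/

open Complex

section RadialSqrt

variable {E : Type*} [NormedAddCommGroup E] [NormedSpace ℝ E]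

lemma norm_inv_sqrt_norm_smul (w : E) : ‖(√‖w‖)⁻¹ • w‖ = √‖w‖ := by
  rcases eq_or_ne w 0 with rfl | hw
  · simp
  · have hpos : 0 < √‖w‖ := Real.sqrt_pos.2 (norm_pos_iff.2 hw)
    rw [norm_smul, norm_inv, Real.norm_of_nonneg hpos.le, inv_mul_eq_iff_eq_mul₀ hpos.ne',
      Real.mul_self_sqrt (norm_nonneg w)]

lemma continuous_inv_sqrt_norm_smul : Continuous fun w : E ↦ (√‖w‖)⁻¹ • w := by
  refine continuous_iff_continuousAt.2 fun w ↦ ?_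
  rcases eq_or_ne w 0 with rfl | hw
  · rw [ContinuousAt, smul_zero, tendsto_zero_iff_norm_tendsto_zero]
    simp_rw [norm_inv_sqrt_norm_smul]
    simpa using continuous_norm.sqrt.tendsto (0 : E)
  · exact ((continuous_norm.sqrt.continuousAt).inv₀
      (Real.sqrt_pos.2 (norm_pos_iff.2 hw)).ne').smul continuousAt_id

variable (E) in
noncomputable def radialSqrtHomeomorph : E ≃ₜ E where
  toFun w := (√‖w‖)⁻¹ • w
  invFun w := ‖w‖ • w
  left_inv w := by
    rcases eq_or_ne w 0 with rfl | hw
    · simp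
    · have hpos : 0 < √‖w‖ := Real.sqrt_pos.2 (norm_pos_iff.2 hw)
      simp only [norm_inv_sqrt_norm_smul, smul_smul, mul_inv_cancel₀ hpos.ne', one_smul]
  right_inv w := by
    rcases eq_or_ne w 0 with rfl | hw
    · simp
    · have hpos : 0 < ‖w‖ := norm_pos_iff.2 hw
      simp only [norm_smul, Real.norm_of_nonneg hpos.le, Real.sqrt_mul_self hpos.le, smul_smul,
        inv_mul_cancel₀ hpos.ne', one_smul]
  continuous_toFun := continuous_inv_sqrt_norm_smul
  continuous_invFun := continuous_norm.smul continuous_id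

end RadialSqrt

noncomputable def shearHomeomorph {T : ℝ → ℝ} (hT : Continuous T) : ℂ ≃ₜ ℂ where
  toFun z := z + T z.im
  invFun z := z - T z.im
  left_inv z := by simp
  right_inv z := by simp
  continuous_toFun := by fun_prop
  continuous_invFun := by fun_prop

lemma preimage_sq_singleton_zero {M : Type*} [MonoidWithZero M] [NoZeroDivisors M] :
    (· ^ 2 : M → M) ⁻¹' {0} = {0} := by
  ext z
  simp

lemma preimage_sq_singleton_sq {R : Type*} [CommRing R] [NoZeroDivisors R] (c : R) :
    (· ^ 2 : R → R) ⁻¹' {c ^ 2} = {c, -c} := by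
  ext z
  simp [sq_eq_sq_iff_eq_or_eq_neg]

lemma continuous_Tshift : Continuous Tshift := by
  unfold Tshift
  fun_prop

lemma phiMap_eq_radialSqrt_sq (z : ℂ) : phiMap z = radialSqrtHomeomorph ℂ (z ^ 2) := by
  simp only [phiMap, radialSqrtHomeomorph, Homeomorph.homeomorph_mk_coe, Equiv.coe_fn_mk,
    norm_pow, Real.sqrt_sq (norm_nonneg z), Complex.real_smul]
  split_ifs with hz <;> simp [hz, div_eq_inv_mul]

noncomputable def fHomeomorph : ℂ ≃ₜ ℂ :=
  (radialSqrtHomeomorph ℂ).trans (shearHomeomorph continuous_Tshift)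

lemma fMap_eq_comp_sq : fMap = fHomeomorph ∘ (· ^ 2) := by
  ext1 z
  simp only [fMap, phiMap_eq_radialSqrt_sq, fHomeomorph, Function.comp_apply,
    Homeomorph.trans_apply]
  rfl

lemma fHomeomorph_zero : fHomeomorph 0 = 2 := by
  simp [fHomeomorph, radialSqrtHomeomorph, shearHomeomorph, Tshift]

lemma preimage_fMap_singleton (w : ℂ) : fMap ⁻¹' {w} = (· ^ 2) ⁻¹' {fHomeomorph.symm w} := by
  ext z
  simp [fMap_eq_comp_sq, Homeomorph.eq_symm_apply]

theorem fMap_is_two_to_one_branched_covering :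
    Continuous fMap ∧ IsOpenMap fMap ∧
    fMap ⁻¹' {2} = {0} ∧
    ∀ w : ℂ, w ≠ 2 → ∃ a b : ℂ, a ≠ b ∧ fMap ⁻¹' {w} = {a, b} := by
  have hsq := Complex.isOpenQuotientMap_pow 2
  refine ⟨?_, ?_, ?_, fun w hw ↦ ?_⟩
  · rw [fMap_eq_comp_sq]
    exact fHomeomorph.continuous.comp hsq.continuous
  · rw [fMap_eq_comp_sq]
    exact fHomeomorph.isOpenMap.comp hsq.isOpenMap
  · rw [preimage_fMap_singleton, ← fHomeomorph_zero, Homeomorph.symm_apply_apply,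
      preimage_sq_singleton_zero]
  · obtain ⟨c, hc⟩ := IsAlgClosed.exists_pow_nat_eq (fHomeomorph.symm w) two_pos
    have hc0 : c ≠ 0 := by
      rintro rfl
      rw [zero_pow two_ne_zero, eq_comm, Homeomorph.symm_apply_eq, fHomeomorph_zero] at hc
      exact hw hc
    refine ⟨c, -c, fun h ↦ hc0 (CharZero.eq_neg_self_iff.1 h), ?_⟩
    rw [preimage_fMap_singleton, ← hc, preimage_sq_singleton_sq]
end
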